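/- arXiv:0912.1973 — 8 statements merged into one kernel-verified Lean document; each statement's English description precedes it below -/
import Mathlib

section
/- Let u : ℝ → ℝ be continuously differentiable with u'(y) > 0 for all y. Fix x ∈ ℝ, γ > 0 and c > 0, and for each positive integer n set x_k^{(n)} = x + kγ/n for k = 0, 1, …, n. Then lim_{n→∞} Σ_{k=0}^{n−1} log[(u(x_k^{(n)}) − u(x_k^{(n)} − c)) / (u(x_{k+1}^{(n)}) − u(x_k^{(n)} − c))] = −∫_x^{x+γ} u'(y) / (u(y) − u(y − c)) dy. -/
open Real MeasureTheory intervalIntegral Filter Finset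

open scoped Interval

/-!
Each factor is an exact integral: by the fundamental theorem of calculus applied to
`t ↦ log (u t - u (x_k - c))`, its logarithm is
`-∫_{x_k}^{x_{k+1}} u' t / (u t - u (x_k - c)) dt`. So the sum is
`-∑_k ∫_{x_k}^{x_{k+1}} F (x_k) t dt` with `F s t = u' t / (u t - u (s - c))`, which is
continuous on the compact triangle `x ≤ s ≤ t ≤ x + γ` (there `s - c < t`). Uniform continuity
of `F` there makes `F (x_k) t` uniformly close to `F t t` once the mesh `γ / n` is small, and the
sum converges to the integral of `F` along the diagonal.
-/

theorem integral_deriv_div_sub_eq_log_sub_log {u : ℝ → ℝ} {a b p : ℝ}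
    (hd : ∀ t ∈ [[a, b]], DifferentiableAt ℝ u t) (hcont : ContinuousOn (deriv u) [[a, b]])
    (hp : ∀ t ∈ [[a, b]], p < u t) :
    ∫ t in a..b, deriv u t / (u t - p) = log (u b - p) - log (u a - p) := by
  refine integral_eq_sub_of_hasDerivAt (f := fun t => log (u t - p)) (fun t ht => ?_) ?_
  · simpa [div_eq_inv_mul] using
      ((hd t ht).hasDerivAt.sub_const p).log (sub_pos.2 (hp t ht)).ne'
  · refine (hcont.div ?_ fun t ht => (sub_pos.2 (hp t ht)).ne').intervalIntegrable
    exact fun t ht => (hd t ht).continuousAt.continuousWithinAt.sub continuousWithinAt_const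

section

variable {E : Type*} [NormedAddCommGroup E] [NormedSpace ℝ E]

theorem norm_sum_integral_sub_integral_diag_le {F : ℝ → ℝ → E} {x : ℕ → ℝ} {n : ℕ} {η : ℝ}
    (hx : Monotone x)
    (hF : ContinuousOn (Function.uncurry F) {p : ℝ × ℝ | x 0 ≤ p.1 ∧ p.1 ≤ p.2 ∧ p.2 ≤ x n})
    (hη : ∀ k < n, ∀ t ∈ Set.Icc (x k) (x (k + 1)), ‖F (x k) t - F t t‖ ≤ η) :
    ‖(∑ k ∈ range n, ∫ t in x k..x (k + 1), F (x k) t) - ∫ t in x 0..x n, F t t‖ ≤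
      η * (x n - x 0) := by
  have hmem {k : ℕ} (hk : k < n) {s t : ℝ} (hs : x k ≤ s) (hst : s ≤ t) (ht : t ≤ x (k + 1)) :
      (s, t) ∈ {p : ℝ × ℝ | x 0 ≤ p.1 ∧ p.1 ≤ p.2 ∧ p.2 ≤ x n} :=
    ⟨(hx k.zero_le).trans hs, hst, ht.trans (hx hk)⟩
  have hint_left (k : ℕ) (hk : k < n) : IntervalIntegrable (F (x k)) volume (x k) (x (k + 1)) := by
    refine ContinuousOn.intervalIntegrable ?_
    rw [Set.uIcc_of_le (hx k.le_succ)]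
    exact hF.comp (continuousOn_const.prodMk continuousOn_id) fun t ht => hmem hk le_rfl ht.1 ht.2
  have hint_diag (k : ℕ) (hk : k < n) :
      IntervalIntegrable (fun t => F t t) volume (x k) (x (k + 1)) := by
    refine ContinuousOn.intervalIntegrable ?_
    rw [Set.uIcc_of_le (hx k.le_succ)]
    exact hF.comp (continuousOn_id.prodMk continuousOn_id) fun t ht => hmem hk ht.1 le_rfl ht.2
  rw [← sum_integral_adjacent_intervals hint_diag, ← sum_sub_distrib]
  calc _ ≤ ∑ k ∈ range n, η * (x (k + 1) - x k) := norm_sum_le_of_le _ fun k hk => ?_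
    _ = η * (x n - x 0) := by rw [← mul_sum, sum_range_sub]
  have hk := mem_range.1 hk
  rw [← integral_sub (hint_left k hk) (hint_diag k hk),
    ← abs_of_nonneg (sub_nonneg.2 (hx k.le_succ))]
  refine norm_integral_le_of_norm_le_const fun t ht => hη k hk t ?_
  rw [Set.uIoc_of_le (hx k.le_succ)] at ht
  exact Set.Ioc_subset_Icc_self ht

theorem tendsto_sum_integral_partition {F : ℝ → ℝ → E} {a h : ℝ} (hh : 0 ≤ h)
    (hF : ContinuousOn (Function.uncurry F) {p : ℝ × ℝ | a ≤ p.1 ∧ p.1 ≤ p.2 ∧ p.2 ≤ a + h}) :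
    Tendsto (fun n : ℕ => ∑ k ∈ range n,
        ∫ t in (a + k * h / n)..(a + (k + 1) * h / n), F (a + k * h / n) t)
      atTop (nhds (∫ t in a..a + h, F t t)) := by
  have hK : IsCompact {p : ℝ × ℝ | a ≤ p.1 ∧ p.1 ≤ p.2 ∧ p.2 ≤ a + h} := by
    refine (isCompact_Icc (a := (a, a)) (b := (a + h, a + h))).of_isClosed_subset ?_
      fun p hp => ⟨⟨hp.1, hp.1.trans hp.2.1⟩, hp.2.1.trans hp.2.2, hp.2.2⟩
    exact (isClosed_le continuous_const continuous_fst).inter <|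
      (isClosed_le continuous_fst continuous_snd).inter <|
        isClosed_le continuous_snd continuous_const
  rw [Metric.tendsto_atTop]
  intro ε hε
  obtain ⟨δ, hδ, hFδ⟩ := Metric.uniformContinuousOn_iff_le.1
    (hK.uniformContinuousOn_of_continuous hF) (ε / (h + 1)) (by positivity)
  obtain ⟨N, hN⟩ := exists_nat_gt (h / δ)
  refine ⟨N, fun n hn => ?_⟩
  have hn0 : (0 : ℝ) < n := (div_nonneg hh hδ.le).trans_lt (hN.trans_le (Nat.cast_le.2 hn))
  have hmesh : h / n ≤ δ := by
    rw [div_lt_iff₀ hδ] at hN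
    rw [div_le_iff₀ hn0]
    nlinarith [(Nat.cast_le (α := ℝ)).2 hn]
  let x : ℕ → ℝ := fun k => a + k * h / n
  have hx : Monotone x := fun i j hij => by simp only [x]; gcongr
  have hx0 : x 0 = a := by simp [x]
  have hxn : x n = a + h := by simp [x, hn0.ne']
  have hstep (k : ℕ) : x (k + 1) - x k = h / n := by simp only [x]; push_cast; ring
  have hclose (k : ℕ) (hk : k < n) (t : ℝ) (ht : t ∈ Set.Icc (x k) (x (k + 1))) :
      ‖F (x k) t - F t t‖ ≤ ε / (h + 1) := by
    have ha : a ≤ x k := hx0 ▸ hx k.zero_le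
    have hb : t ≤ a + h := ht.2.trans (hxn ▸ hx hk)
    rw [← dist_eq_norm]
    refine hFδ (x k, t) ⟨ha, ht.1, hb⟩ (t, t) ⟨ha.trans ht.1, le_rfl, hb⟩ ?_
    rw [Prod.dist_eq, dist_self, max_eq_left dist_nonneg, Real.dist_eq,
      abs_of_nonpos (by linarith [ht.1])]
    linarith [ht.2, hstep k]
  have hbound := norm_sum_integral_sub_integral_diag_le hx (hx0 ▸ hxn ▸ hF) hclose
  rw [hx0, hxn] at hbound
  simp only [x, Nat.cast_add_one] at hbound
  rw [dist_eq_norm]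
  calc _ ≤ ε / (h + 1) * (a + h - a) := hbound
    _ < ε := by
      rw [add_sub_cancel_left, div_mul_eq_mul_div, div_lt_iff₀ (by positivity)]
      linarith

end

/-- The limit of the log-product of down-crossing-avoidance probabilities over the
partition `x_k = x + kγ/n` (lower-bound version from the proof of Theorem 1(i)). -/
theorem log_product_limit_lower
    (u : ℝ → ℝ) (hu : ContDiff ℝ 1 u) (hu' : ∀ y, 0 < deriv u y)
    (x γ c : ℝ) (hγ : 0 < γ) (hc : 0 < c) :
    Tendsto
      (fun n : ℕ => ∑ k ∈ Finset.range n,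
        Real.log ((u (x + (k : ℝ) * γ / (n : ℝ)) - u (x + (k : ℝ) * γ / (n : ℝ) - c)) /
          (u (x + ((k : ℝ) + 1) * γ / (n : ℝ)) - u (x + (k : ℝ) * γ / (n : ℝ) - c))))
      atTop
      (nhds (-∫ y in x..(x + γ), deriv u y / (u y - u (y - c)))) := by
  have hmono : StrictMono u := strictMono_of_deriv_pos hu'
  have hud : Differentiable ℝ u := hu.differentiable one_ne_zero
  have hu'c : Continuous (deriv u) := hu.continuous_deriv le_rfl
  have huc : Continuous u := hud.continuous
  have hlt {s t : ℝ} (hst : s ≤ t) : u (s - c) < u t := hmono (by linarith)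
  have hF : ContinuousOn (fun p : ℝ × ℝ => deriv u p.2 / (u p.2 - u (p.1 - c)))
      {p : ℝ × ℝ | x ≤ p.1 ∧ p.1 ≤ p.2 ∧ p.2 ≤ x + γ} :=
    (by fun_prop : Continuous _).continuousOn.div (by fun_prop)
      fun p hp => (sub_pos.2 (hlt hp.2.1)).ne'
  have hterm {s t : ℝ} (hst : s ≤ t) : log ((u s - u (s - c)) / (u t - u (s - c))) =
      -∫ y in s..t, deriv u y / (u y - u (s - c)) := by
    have hp (y : ℝ) (hy : y ∈ [[s, t]]) : u (s - c) < u y := by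
      rw [Set.uIcc_of_le hst] at hy
      exact hlt hy.1
    rw [integral_deriv_div_sub_eq_log_sub_log (fun y _ => hud y) hu'c.continuousOn hp,
      log_div (sub_pos.2 (hlt le_rfl)).ne' (sub_pos.2 (hlt hst)).ne', neg_sub]
  refine ((tendsto_sum_integral_partition (F := fun s t => deriv u t / (u t - u (s - c)))
    hγ.le hF).neg).congr fun n => ?_
  rw [← sum_neg_distrib]
  exact sum_congr rfl fun k _ => (hterm (by gcongr; linarith)).symm
end

section
/- Let u : ℝ → ℝ be continuously differentiable with u'(y) > 0 for all y. Fix x ∈ ℝ, γ > 0 and c > 0, and for each positive integer n set x_k^{(n)} = x + kγ/n for k = 0, 1, …, n. Then lim_{n→∞} Σ_{k=0}^{n−1} log[(u(x_k^{(n)}) − u(x_{k+1}^{(n)} − c)) / (u(x_{k+1}^{(n)}) − u(x_{k+1}^{(n)} − c))] = −∫_x^{x+γ} u'(y) / (u(y) − u(y − c)) dy. -/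
/-!
Let `x_k = x + kγ/n` and `m = u (x_{k+1} - c)`. The `k`-th summand is
`log (u x_k - m) - log (u x_{k+1} - m) = -∫_{x_k}^{x_{k+1}} u' / (u - m)`, so it differs from
`-∫_{x_k}^{x_{k+1}} u'(y) / (u y - u (y - c)) dy` only through replacing `u (y - c)` by `m`.
For `y` in the step this changes the subtracted value by at most `M γ/n`, while both denominators
stay above `μ c / 2`, where `0 < μ ≤ u' ≤ M` on `[x - c, x + γ]` by compactness. Each step thus
costs `O((γ/n)²)`, and the `n` steps together `O(1/n)`.
-/

open Real MeasureTheory intervalIntegral Filter Finset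

theorem abs_div_sub_sub_div_sub_le {d M A m₁ m₂ E P Q : ℝ} (hd : 0 ≤ d) (hdM : d ≤ M)
    (hm : m₁ ≤ m₂) (hE : m₂ - m₁ ≤ E) (hP : 0 < P) (hPA : P ≤ A - m₂) (hQ : 0 < Q)
    (hQA : Q ≤ A - m₁) :
    |d / (A - m₁) - d / (A - m₂)| ≤ M * E / (P * Q) := by
  have h₁ : 0 < A - m₁ := hQ.trans_le hQA
  have h₂ : 0 < A - m₂ := hP.trans_le hPA
  have hdiff : d / (A - m₁) - d / (A - m₂) = -(d * (m₂ - m₁) / ((A - m₂) * (A - m₁))) := by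
    field_simp
    ring
  rw [hdiff, abs_neg, abs_of_nonneg (by have := sub_nonneg.2 hm; positivity)]
  exact div_le_div₀ (by nlinarith) (mul_le_mul hdM hE (sub_nonneg.2 hm) (hd.trans hdM))
    (mul_pos hP hQ) (mul_le_mul hPA hQA hQ.le h₂.le)

section

variable {u : ℝ → ℝ}

theorem integral_deriv_div_sub_const (hu : ContDiff ℝ 1 u) {a b m : ℝ}
    (hm : ∀ y ∈ Set.uIcc a b, m < u y) :
    ∫ y in a..b, deriv u y / (u y - m) = log (u b - m) - log (u a - m) := by
  have hud : Differentiable ℝ u := hu.differentiable one_ne_zero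
  have hne : ∀ y ∈ Set.uIcc a b, u y - m ≠ 0 := fun y hy => (sub_pos.2 (hm y hy)).ne'
  refine integral_eq_sub_of_hasDerivAt (fun y hy => ((hud y).hasDerivAt.sub_const m).log (hne y hy))
    (ContinuousOn.intervalIntegrable ?_)
  exact (hu.continuous_deriv le_rfl).continuousOn.div
    (hud.continuous.sub continuous_const).continuousOn hne

theorem image_sub_mem_Icc_of_deriv_mem_Icc (hu : Differentiable ℝ u) {μ M p q : ℝ}
    (hderiv : ∀ y ∈ Set.Icc p q, deriv u y ∈ Set.Icc μ M) {s t : ℝ} (hps : p ≤ s) (hst : s ≤ t)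
    (htq : t ≤ q) :
    u t - u s ∈ Set.Icc (μ * (t - s)) (M * (t - s)) :=
  have hs : s ∈ Set.Icc p q := ⟨hps, hst.trans htq⟩
  have ht : t ∈ Set.Icc p q := ⟨hps.trans hst, htq⟩
  ⟨(convex_Icc p q).mul_sub_le_image_sub_of_le_deriv hu.continuous.continuousOn
      hu.differentiableOn (fun y hy => (hderiv y (interior_subset hy)).1) s hs t ht hst,
    (convex_Icc p q).image_sub_le_mul_sub_of_deriv_le hu.continuous.continuousOn
      hu.differentiableOn (fun y hy => (hderiv y (interior_subset hy)).2) s hs t ht hst⟩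

theorem abs_deriv_div_sub_sub_le (hu : Differentiable ℝ u) {μ M a b c y : ℝ} (hμ : 0 < μ)
    (hc : 0 < c) (hbc : b - a ≤ c / 2)
    (hderiv : ∀ y ∈ Set.Icc (a - c) b, deriv u y ∈ Set.Icc μ M) (hy : y ∈ Set.Ioc a b) :
    |deriv u y / (u y - u (y - c)) - deriv u y / (u y - u (b - c))|
      ≤ 2 * M ^ 2 / (μ ^ 2 * c ^ 2) * (b - a) := by
  obtain ⟨hay, hyb⟩ := hy
  obtain ⟨hμy, hMy⟩ := hderiv y ⟨by linarith, hyb⟩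
  have hM : 0 ≤ M := hμ.le.trans (hμy.trans hMy)
  have hgap := (image_sub_mem_Icc_of_deriv_mem_Icc hu hderiv (s := y - c) (t := y)
    (by linarith) (by linarith) hyb).1
  have hfar := (image_sub_mem_Icc_of_deriv_mem_Icc hu hderiv (s := b - c) (t := y)
    (by linarith) (by linarith) hyb).1
  obtain ⟨hshift₀, hshift₁⟩ := image_sub_mem_Icc_of_deriv_mem_Icc hu hderiv (s := y - c)
    (t := b - c) (by linarith) (by linarith) (by linarith)
  refine (abs_div_sub_sub_div_sub_le (hμ.le.trans hμy) hMy
    (by nlinarith [mul_nonneg hμ.le (sub_nonneg.2 hyb)]) (E := M * (b - a))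
    (by nlinarith [mul_le_mul_of_nonneg_left (show b - y ≤ b - a by linarith) hM])
    (P := μ * (c / 2)) (Q := μ * c) (by positivity) (by nlinarith) (by positivity)
    (by linarith)).trans (le_of_eq ?_)
  field_simp

theorem abs_log_div_add_integral_le (hu : ContDiff ℝ 1 u) {μ M a b c : ℝ} (hμ : 0 < μ)
    (hc : 0 < c) (hab : a ≤ b) (hbc : b - a ≤ c / 2)
    (hderiv : ∀ y ∈ Set.Icc (a - c) b, deriv u y ∈ Set.Icc μ M) :
    |log ((u a - u (b - c)) / (u b - u (b - c))) + ∫ y in a..b, deriv u y / (u y - u (y - c))|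
      ≤ 2 * M ^ 2 / (μ ^ 2 * c ^ 2) * (b - a) ^ 2 := by
  have hud : Differentiable ℝ u := hu.differentiable one_ne_zero
  have hlower : ∀ y ∈ Set.uIcc a b, ∀ s, a - c ≤ s → s < y → u s < u y := by
    intro y hy s hs hsy
    rw [Set.uIcc_of_le hab] at hy
    have := (image_sub_mem_Icc_of_deriv_mem_Icc hud hderiv (by linarith) hsy.le hy.2).1
    nlinarith
  have hm : ∀ y ∈ Set.uIcc a b, u (b - c) < u y := fun y hy =>
    hlower y hy _ (by linarith) (by rw [Set.uIcc_of_le hab] at hy; linarith [hy.1])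
  have hgap : ∀ y ∈ Set.uIcc a b, u (y - c) < u y := fun y hy => by
    rw [Set.uIcc_of_le hab] at hy
    exact hlower y (Set.Icc_subset_uIcc hy) _ (by linarith [hy.1]) (by linarith)
  have hint : ∀ m : ℝ → ℝ, Continuous m → (∀ y ∈ Set.uIcc a b, m y < u y) →
      IntervalIntegrable (fun y => deriv u y / (u y - m y)) volume a b := fun m hm hlt =>
    ((hu.continuous_deriv le_rfl).continuousOn.div (hud.continuous.sub hm).continuousOn
      fun y hy => (sub_pos.2 (hlt y hy)).ne').intervalIntegrable
  have hlog : log ((u a - u (b - c)) / (u b - u (b - c)))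
      = -∫ y in a..b, deriv u y / (u y - u (b - c)) := by
    rw [integral_deriv_div_sub_const hu hm, log_div (sub_pos.2 (hm a Set.left_mem_uIcc)).ne'
      (sub_pos.2 (hm b Set.right_mem_uIcc)).ne']
    ring
  rw [hlog, neg_add_eq_sub, ← integral_sub (hint (fun y => u (y - c))
    (hud.continuous.comp (continuous_sub_right c)) hgap) (hint _ continuous_const hm),
    ← Real.norm_eq_abs]
  refine (intervalIntegral.norm_integral_le_of_norm_le_const
    (C := 2 * M ^ 2 / (μ ^ 2 * c ^ 2) * (b - a)) fun y hy => ?_).trans (le_of_eq ?_)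
  · rw [Set.uIoc_of_le hab] at hy
    exact abs_deriv_div_sub_sub_le hud hμ hc hbc hderiv hy
  · rw [abs_of_nonneg (sub_nonneg.2 hab)]
    ring

end

theorem add_natCast_mul_div_mem_Icc {x γ : ℝ} (hγ : 0 ≤ γ) {k n : ℕ} (hk : k ≤ n) :
    x + k * γ / n ∈ Set.Icc x (x + γ) := by
  rcases n.eq_zero_or_pos with rfl | hn
  · simp [Nat.le_zero.1 hk, hγ]
  refine ⟨le_add_of_nonneg_right (by positivity), add_le_add_right ?_ x⟩
  rw [div_le_iff₀ (by positivity)]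
  exact mul_comm γ n ▸ mul_le_mul_of_nonneg_right (by exact_mod_cast hk) hγ

theorem tendsto_sum_of_abs_sub_integral_le {f : ℝ → ℝ} {x γ K : ℝ} {t : ℕ → ℕ → ℝ}
    (hγ : 0 ≤ γ) (hf : IntervalIntegrable f volume x (x + γ))
    (ht : ∀ᶠ n : ℕ in atTop, ∀ k < n,
      |t n k - ∫ y in x + k * γ / n..x + (k + 1) * γ / n, f y| ≤ K / n ^ 2) :
    Tendsto (fun n => ∑ k ∈ range n, t n k) atTop (nhds (∫ y in x..x + γ, f y)) := by
  rw [← tendsto_sub_nhds_zero_iff]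
  refine squeeze_zero_norm' ?_ (tendsto_const_div_atTop_nhds_zero_nat K)
  filter_upwards [ht, eventually_ge_atTop 1] with n hn hn1
  have hn0 : (n : ℝ) ≠ 0 := by positivity
  have hsplit : ∑ k ∈ range n, ∫ y in x + k * γ / n..x + (k + 1) * γ / n, f y
      = ∫ y in x..x + γ, f y := by
    have hmem : ∀ k ≤ n, x + k * γ / n ∈ Set.uIcc x (x + γ) := fun k hk =>
      Set.Icc_subset_uIcc (add_natCast_mul_div_mem_Icc hγ hk)
    have := sum_integral_adjacent_intervals (a := fun k : ℕ => x + k * γ / n) (μ := volume)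
      fun k hk => hf.mono_set (Set.uIcc_subset_uIcc (hmem k hk.le) (hmem (k + 1) hk))
    simpa [mul_div_cancel_left₀ γ hn0] using this
  calc ‖∑ k ∈ range n, t n k - ∫ y in x..x + γ, f y‖
      = ‖∑ k ∈ range n, (t n k - ∫ y in x + k * γ / n..x + (k + 1) * γ / n, f y)‖ := by
        rw [← hsplit, sum_sub_distrib]
    _ ≤ ∑ k ∈ range n, K / n ^ 2 :=
        (norm_sum_le _ _).trans (sum_le_sum fun k hk => hn k (mem_range.1 hk))
    _ = K / n := by
        rw [sum_const, card_range, nsmul_eq_mul]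
        field_simp

/-- The limit of the log-product of down-crossing-avoidance probabilities over the
partition `x_k = x + kγ/n` (upper-bound version from the proof of Theorem 1(i)). -/
theorem log_product_limit_upper
    (u : ℝ → ℝ) (hu : ContDiff ℝ 1 u) (hu' : ∀ y, 0 < deriv u y)
    (x γ c : ℝ) (hγ : 0 < γ) (hc : 0 < c) :
    Tendsto
      (fun n : ℕ => ∑ k ∈ Finset.range n,
        Real.log ((u (x + (k : ℝ) * γ / (n : ℝ)) - u (x + ((k : ℝ) + 1) * γ / (n : ℝ) - c)) /
          (u (x + ((k : ℝ) + 1) * γ / (n : ℝ)) - u (x + ((k : ℝ) + 1) * γ / (n : ℝ) - c))))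
      atTop
      (nhds (-∫ y in x..(x + γ), deriv u y / (u y - u (y - c)))) := by
  have hdc : Continuous (deriv u) := hu.continuous_deriv le_rfl
  obtain ⟨μ, hμ, hμle⟩ := isCompact_Icc.exists_forall_le' (a := 0) (s := Set.Icc (x - c) (x + γ))
    hdc.continuousOn fun y _ => hu' y
  obtain ⟨M, hM⟩ := isCompact_Icc.bddAbove_image (K := Set.Icc (x - c) (x + γ)) hdc.continuousOn
  have hcont : Continuous fun y => deriv u y / (u y - u (y - c)) := by
    have hud := hu.continuous
    exact hdc.div (hud.sub (hud.comp (continuous_sub_right c))) fun y =>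
      (sub_pos.2 (strictMono_of_deriv_pos hu' (sub_lt_self y hc))).ne'
  rw [← intervalIntegral.integral_neg]
  refine tendsto_sum_of_abs_sub_integral_le (K := 2 * M ^ 2 / (μ ^ 2 * c ^ 2) * γ ^ 2) hγ.le
    (hcont.intervalIntegrable _ _).neg ?_
  filter_upwards [(tendsto_const_div_atTop_nhds_zero_nat γ).eventually
    (eventually_le_nhds (half_pos hc))] with n hnc k hk
  have hstep : x + (k + 1) * γ / n - (x + k * γ / n) = γ / n := by ring
  have hk₀ := add_natCast_mul_div_mem_Icc (x := x) hγ.le hk.le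
  have hk₁ : x + (k + 1) * γ / n ∈ Set.Icc x (x + γ) := by
    exact_mod_cast add_natCast_mul_div_mem_Icc (x := x) hγ.le (Nat.succ_le_of_lt hk)
  rw [intervalIntegral.integral_neg, sub_neg_eq_add]
  have hγn : 0 ≤ γ / n := by positivity
  refine (abs_log_div_add_integral_le hu hμ hc (by linarith)
    (hstep ▸ hnc) fun y hy => ⟨hμle y ⟨?_, ?_⟩, hM (Set.mem_image_of_mem _ ⟨?_, ?_⟩)⟩).trans
    (le_of_eq ?_)
  any_goals linarith [hy.1, hy.2, hk₀.1, hk₁.2]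
  rw [hstep]
  ring
end

section
/- Let a : ℝ → ℝ be continuous with a > 0, let b₁, b₂ : ℝ → ℝ be locally bounded and measurable with b₁(x) ≤ b₂(x) for all x, and let c > 0. For i = 1, 2 define u_i(x) = ∫₀ˣ exp(−∫₀ʸ (2b_i(z)/a(z)) dz) dy and H(b_i, x) = exp(−∫₀ˣ (2b_i(z)/a(z)) dz) / (u_i(x) − u_i(x − c)). Then H(b₁, x) ≥ H(b₂, x) for every x ∈ ℝ. -/
/-!
Writing `F(x) = ∫₀ˣ 2b/a`, one has `H(b, x) = (∫_{x-c}^x exp(F(x) - F(y)) dy)⁻¹`, and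
`F(x) - F(y) = ∫_y^x 2b/a` is monotone in `b` for `y ≤ x`, so the denominator grows with `b`.
-/

open Real MeasureTheory intervalIntegral Set
open scoped Interval

theorem intervalIntegrable_of_bounded_on_compacts {μ : Measure ℝ} [IsLocallyFiniteMeasure μ]
    {f : ℝ → ℝ} (hf : AEStronglyMeasurable f μ)
    (hloc : ∀ K : Set ℝ, IsCompact K → ∃ M, ∀ x ∈ K, |f x| ≤ M) (s t : ℝ) :
    IntervalIntegrable f μ s t := by
  obtain ⟨M, hM⟩ := hloc [[s, t]] isCompact_uIcc
  rw [intervalIntegrable_iff]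
  refine (IntegrableOn.of_bound isCompact_uIcc.measure_lt_top hf.restrict M ?_).mono_set
    uIoc_subset_uIcc
  exact (ae_restrict_iff' measurableSet_uIcc).2 (ae_of_all _ hM)

theorem IntervalIntegrable.div_continuousOn {μ : Measure ℝ} {f g : ℝ → ℝ} {s t : ℝ}
    (hf : IntervalIntegrable f μ s t) (hg : ContinuousOn g [[s, t]])
    (hg₀ : ∀ x ∈ [[s, t]], g x ≠ 0) : IntervalIntegrable (fun x => f x / g x) μ s t := by
  simpa only [div_eq_mul_inv] using hf.mul_continuousOn (g := fun x => (g x)⁻¹) (hg.inv₀ hg₀)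

theorem intervalIntegrable_drift {a b : ℝ → ℝ} (ha_cont : Continuous a) (ha₀ : ∀ x, a x ≠ 0)
    (hb_meas : Measurable b) (hb_loc : ∀ K : Set ℝ, IsCompact K → ∃ M, ∀ x ∈ K, |b x| ≤ M)
    (s t : ℝ) : IntervalIntegrable (fun z => 2 * b z / a z) volume s t :=
  ((intervalIntegrable_of_bounded_on_compacts hb_meas.aestronglyMeasurable hb_loc s t).const_mul
    2).div_continuousOn ha_cont.continuousOn fun x _ => ha₀ x

theorem primitive_sub_primitive_le {g₁ g₂ : ℝ → ℝ}
    (hg₁ : ∀ s t, IntervalIntegrable g₁ volume s t) (hg₂ : ∀ s t, IntervalIntegrable g₂ volume s t)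
    (hg : g₁ ≤ g₂) {x y : ℝ} (hyx : y ≤ x) :
    (∫ z in (0:ℝ)..x, g₁ z) - ∫ z in (0:ℝ)..y, g₁ z ≤
      (∫ z in (0:ℝ)..x, g₂ z) - ∫ z in (0:ℝ)..y, g₂ z := by
  rw [integral_interval_sub_left (hg₁ 0 x) (hg₁ 0 y),
    integral_interval_sub_left (hg₂ 0 x) (hg₂ 0 y)]
  exact integral_mono hyx (hg₁ y x) (hg₂ y x) hg

theorem exp_neg_div_integral_exp_neg (F : ℝ → ℝ) (s x : ℝ) :
    exp (-F x) / (∫ y in s..x, exp (-F y)) = (∫ y in s..x, exp (F x - F y))⁻¹ := by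
  simp_rw [sub_eq_add_neg, exp_add, intervalIntegral.integral_const_mul, mul_inv, ← exp_neg,
    div_eq_mul_inv]

theorem inv_integral_exp_sub_anti {F₁ F₂ : ℝ → ℝ} (hF₁ : Continuous F₁) (hF₂ : Continuous F₂)
    {s x : ℝ} (hsx : s < x) (h : ∀ y ∈ Icc s x, F₁ x - F₁ y ≤ F₂ x - F₂ y) :
    (∫ y in s..x, exp (F₂ x - F₂ y))⁻¹ ≤ (∫ y in s..x, exp (F₁ x - F₁ y))⁻¹ := by
  have hint₁ : IntervalIntegrable (fun y => exp (F₁ x - F₁ y)) volume s x :=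
    (by fun_prop : Continuous fun y => exp (F₁ x - F₁ y)).intervalIntegrable _ _
  have hint₂ : IntervalIntegrable (fun y => exp (F₂ x - F₂ y)) volume s x :=
    (by fun_prop : Continuous fun y => exp (F₂ x - F₂ y)).intervalIntegrable _ _
  exact inv_anti₀ (intervalIntegral_pos_of_pos hint₁ (fun _ => exp_pos _) hsx)
    (integral_mono_on hsx.le hint₁ hint₂ fun y hy => exp_le_exp.2 (h y hy))

/-- Monotonicity of `H(b,x) = u'(x)/(u(x) − u(x−c))` in the drift `b`
(Proposition 1 of the paper). -/
theorem H_antitone_in_drift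
    (a b₁ b₂ : ℝ → ℝ) (ha_cont : Continuous a) (ha_pos : ∀ x, 0 < a x)
    (hb₁_meas : Measurable b₁) (hb₂_meas : Measurable b₂)
    (hb₁_loc : ∀ K : Set ℝ, IsCompact K → ∃ M, ∀ x ∈ K, |b₁ x| ≤ M)
    (hb₂_loc : ∀ K : Set ℝ, IsCompact K → ∃ M, ∀ x ∈ K, |b₂ x| ≤ M)
    (hb : ∀ x, b₁ x ≤ b₂ x)
    (c : ℝ) (hc : 0 < c)
    (u₁ u₂ : ℝ → ℝ)
    (hu₁ : ∀ x, u₁ x = ∫ y in (0:ℝ)..x, Real.exp (-∫ z in (0:ℝ)..y, 2 * b₁ z / a z))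
    (hu₂ : ∀ x, u₂ x = ∫ y in (0:ℝ)..x, Real.exp (-∫ z in (0:ℝ)..y, 2 * b₂ z / a z)) :
    ∀ x : ℝ,
      Real.exp (-∫ z in (0:ℝ)..x, 2 * b₂ z / a z) / (u₂ x - u₂ (x - c)) ≤
        Real.exp (-∫ z in (0:ℝ)..x, 2 * b₁ z / a z) / (u₁ x - u₁ (x - c)) := by
  intro x
  have hg₁ := intervalIntegrable_drift ha_cont (fun x => (ha_pos x).ne') hb₁_meas hb₁_loc
  have hg₂ := intervalIntegrable_drift ha_cont (fun x => (ha_pos x).ne') hb₂_meas hb₂_loc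
  set F₁ : ℝ → ℝ := fun y => ∫ z in (0:ℝ)..y, 2 * b₁ z / a z
  set F₂ : ℝ → ℝ := fun y => ∫ z in (0:ℝ)..y, 2 * b₂ z / a z
  have hF₁ : Continuous F₁ := continuous_primitive hg₁ 0
  have hF₂ : Continuous F₂ := continuous_primitive hg₂ 0
  have hu_sub {u : ℝ → ℝ} {F : ℝ → ℝ} (hF : Continuous F)
      (hu : ∀ x, u x = ∫ y in (0:ℝ)..x, exp (-F y)) :
      u x - u (x - c) = ∫ y in (x - c)..x, exp (-F y) := by
    have hint : Continuous fun y => exp (-F y) := by fun_prop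
    rw [hu, hu]
    exact integral_interval_sub_left (hint.intervalIntegrable _ _) (hint.intervalIntegrable _ _)
  have hg : (fun z => 2 * b₁ z / a z) ≤ fun z => 2 * b₂ z / a z := fun z =>
    div_le_div_of_nonneg_right (by linarith [hb z]) (ha_pos z).le
  have key := inv_integral_exp_sub_anti hF₁ hF₂ (s := x - c) (x := x) (by linarith)
    fun y hy => primitive_sub_primitive_le hg₁ hg₂ hg hy.2
  rw [← exp_neg_div_integral_exp_neg F₁, ← exp_neg_div_integral_exp_neg F₂] at key
  rwa [hu_sub hF₁ hu₁, hu_sub hF₂ hu₂]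
end

section
/- Let a : ℝ → ℝ be continuous with a > 0, let b₁, b₂ : ℝ → ℝ be locally bounded and measurable with b₁(x) ≤ b₂(x) for all x, and let c > 0. For i = 1, 2 define u_i(x) = ∫₀ˣ exp(−∫₀ʸ (2b_i(z)/a(z)) dz) dy. If ∫_{x₀}^∞ exp(−∫₀ˣ (2b₁(z)/a(z)) dz) / (u₁(x) − u₁(x − c)) dx < ∞ for some x₀ ∈ ℝ, then also ∫_{x₀}^∞ exp(−∫₀ˣ (2b₂(z)/a(z)) dz) / (u₂(x) − u₂(x − c)) dx < ∞. -/
/-!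
Write `β = 2b/a` and `s_β = exp (-∫₀ˣ β)` for the scale density, so that `u = ∫₀ˣ s_β` and the
criterion integrand is `s_β x / ∫_{x-c}^x s_β`. For `y ≤ x`, `s_β x / s_β y = exp (-∫_y^x β)`
decreases as `β` increases; integrating `s_{β₂} x * s_{β₁} y ≤ s_{β₁} x * s_{β₂} y` over
`y ∈ [x - c, x]` shows that the integrand for `b₂` is pointwise bounded by the one for `b₁`.
-/

open Real MeasureTheory intervalIntegral Set

theorem locallyIntegrable_div_of_continuous_pos {a b : ℝ → ℝ} (ha_cont : Continuous a)
    (ha_pos : ∀ x, 0 < a x) (hb_meas : Measurable b)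
    (hb_loc : ∀ K : Set ℝ, IsCompact K → ∃ M, ∀ x ∈ K, |b x| ≤ M) :
    LocallyIntegrable (fun z => b z / a z) volume := by
  refine locallyIntegrable_iff.mpr fun K hK => ?_
  obtain ⟨M, hM⟩ := hb_loc K hK
  obtain ⟨N, hN⟩ := hK.exists_bound_of_continuousOn
    (ha_cont.inv₀ fun x => (ha_pos x).ne').continuousOn
  refine Measure.integrableOn_of_bounded hK.measure_lt_top.ne
    (hb_meas.div ha_cont.measurable).aestronglyMeasurable (M := M * N)
    ((ae_restrict_iff' hK.measurableSet).mpr (ae_of_all _ fun z hz => ?_))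
  rw [div_eq_mul_inv, norm_mul, Real.norm_eq_abs]
  exact mul_le_mul (hM z hz) (hN z hz) (norm_nonneg _) ((abs_nonneg _).trans (hM z hz))

theorem MeasureTheory.LocallyIntegrable.intervalIntegrable {E : Type*} [NormedAddCommGroup E]
    {f : ℝ → E} {μ : Measure ℝ} (hf : LocallyIntegrable f μ) (p q : ℝ) :
    IntervalIntegrable f μ p q :=
  (hf.integrableOn_isCompact isCompact_uIcc).intervalIntegrable

theorem div_integral_le_div_integral_of_mul_le {f g : ℝ → ℝ} {p q : ℝ} (hpq : p ≤ q)
    (hf : IntervalIntegrable f volume p q) (hg : IntervalIntegrable g volume p q)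
    (hf_pos : 0 < ∫ y in p..q, f y) (hg_pos : 0 < ∫ y in p..q, g y)
    (hfg : ∀ y ∈ Icc p q, g q * f y ≤ f q * g y) :
    g q / ∫ y in p..q, g y ≤ f q / ∫ y in p..q, f y := by
  rw [div_le_div_iff₀ hg_pos hf_pos, ← intervalIntegral.integral_const_mul,
    ← intervalIntegral.integral_const_mul]
  exact integral_mono_on hpq (hf.const_mul _) (hg.const_mul _) hfg

noncomputable def scaleDensity (β : ℝ → ℝ) (x : ℝ) : ℝ :=
  exp (-∫ z in (0:ℝ)..x, β z)

noncomputable def scale (β : ℝ → ℝ) (x : ℝ) : ℝ :=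
  ∫ y in (0:ℝ)..x, scaleDensity β y

noncomputable def downCrossingIntegrand (β : ℝ → ℝ) (c x : ℝ) : ℝ :=
  scaleDensity β x / (scale β x - scale β (x - c))

theorem scaleDensity_pos (β : ℝ → ℝ) (x : ℝ) : 0 < scaleDensity β x :=
  exp_pos _

section

variable {β β₁ β₂ : ℝ → ℝ}

theorem continuous_scaleDensity (hβ : LocallyIntegrable β volume) :
    Continuous (scaleDensity β) :=
  continuous_exp.comp (continuous_primitive hβ.intervalIntegrable 0).neg

theorem continuous_scale (hβ : LocallyIntegrable β volume) : Continuous (scale β) :=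
  continuous_primitive (continuous_scaleDensity hβ).intervalIntegrable 0

theorem scale_sub (hβ : LocallyIntegrable β volume) (x y : ℝ) :
    scale β x - scale β y = ∫ t in y..x, scaleDensity β t :=
  integral_interval_sub_left ((continuous_scaleDensity hβ).intervalIntegrable _ _)
    ((continuous_scaleDensity hβ).intervalIntegrable _ _)

theorem scale_sub_pos (hβ : LocallyIntegrable β volume) {x y : ℝ} (hyx : y < x) :
    0 < scale β x - scale β y := by
  rw [scale_sub hβ]
  exact intervalIntegral_pos_of_pos_on ((continuous_scaleDensity hβ).intervalIntegrable _ _)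
    (fun t _ => scaleDensity_pos β t) hyx

theorem scaleDensity_mul_le_of_le (hβ₁ : LocallyIntegrable β₁ volume)
    (hβ₂ : LocallyIntegrable β₂ volume) (hβ : ∀ z, β₁ z ≤ β₂ z) {x y : ℝ} (hyx : y ≤ x) :
    scaleDensity β₂ x * scaleDensity β₁ y ≤ scaleDensity β₁ x * scaleDensity β₂ y := by
  have hint : ∫ z in y..x, β₁ z ≤ ∫ z in y..x, β₂ z :=
    integral_mono_on hyx (hβ₁.intervalIntegrable y x) (hβ₂.intervalIntegrable y x)
      fun z _ => hβ z
  rw [← integral_interval_sub_left (hβ₁.intervalIntegrable 0 x) (hβ₁.intervalIntegrable 0 y),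
    ← integral_interval_sub_left (hβ₂.intervalIntegrable 0 x) (hβ₂.intervalIntegrable 0 y)]
    at hint
  simp only [scaleDensity, ← exp_add]
  exact exp_le_exp.mpr (by linarith)

variable {c : ℝ}

theorem downCrossingIntegrand_pos (hβ : LocallyIntegrable β volume) (hc : 0 < c) (x : ℝ) :
    0 < downCrossingIntegrand β c x :=
  div_pos (scaleDensity_pos β x) (scale_sub_pos hβ (by linarith))

theorem continuous_downCrossingIntegrand (hβ : LocallyIntegrable β volume) (hc : 0 < c) :
    Continuous (downCrossingIntegrand β c) :=
  (continuous_scaleDensity hβ).div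
    ((continuous_scale hβ).sub ((continuous_scale hβ).comp (continuous_sub_right c)))
    fun x => (scale_sub_pos hβ (by linarith)).ne'

theorem downCrossingIntegrand_le_of_le (hβ₁ : LocallyIntegrable β₁ volume)
    (hβ₂ : LocallyIntegrable β₂ volume) (hβ : ∀ z, β₁ z ≤ β₂ z) (hc : 0 < c) (x : ℝ) :
    downCrossingIntegrand β₂ c x ≤ downCrossingIntegrand β₁ c x := by
  have hxc : x - c < x := by linarith
  unfold downCrossingIntegrand
  rw [scale_sub hβ₁, scale_sub hβ₂]
  exact div_integral_le_div_integral_of_mul_le hxc.le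
    ((continuous_scaleDensity hβ₁).intervalIntegrable _ _)
    ((continuous_scaleDensity hβ₂).intervalIntegrable _ _)
    (scale_sub hβ₁ x (x - c) ▸ scale_sub_pos hβ₁ hxc)
    (scale_sub hβ₂ x (x - c) ▸ scale_sub_pos hβ₂ hxc)
    fun y hy => scaleDensity_mul_le_of_le hβ₁ hβ₂ hβ hy.2

theorem integrableOn_downCrossingIntegrand_of_le (hβ₁ : LocallyIntegrable β₁ volume)
    (hβ₂ : LocallyIntegrable β₂ volume) (hβ : ∀ z, β₁ z ≤ β₂ z) (hc : 0 < c) {s : Set ℝ}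
    (h₁ : IntegrableOn (downCrossingIntegrand β₁ c) s) :
    IntegrableOn (downCrossingIntegrand β₂ c) s :=
  h₁.mono' (continuous_downCrossingIntegrand hβ₂ hc).aestronglyMeasurable
    (ae_of_all _ fun x => by
      rw [Real.norm_of_nonneg (downCrossingIntegrand_pos hβ₂ hc x).le]
      exact downCrossingIntegrand_le_of_le hβ₁ hβ₂ hβ hc x)

end

/-- If the down-crossing criterion integral is finite for the smaller drift `b₁`,
then it is finite for the larger drift `b₂` (consequence of Proposition 1). -/
theorem criterion_monotone_in_drift
    (a b₁ b₂ : ℝ → ℝ) (ha_cont : Continuous a) (ha_pos : ∀ x, 0 < a x)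
    (hb₁_meas : Measurable b₁) (hb₂_meas : Measurable b₂)
    (hb₁_loc : ∀ K : Set ℝ, IsCompact K → ∃ M, ∀ x ∈ K, |b₁ x| ≤ M)
    (hb₂_loc : ∀ K : Set ℝ, IsCompact K → ∃ M, ∀ x ∈ K, |b₂ x| ≤ M)
    (hb : ∀ x, b₁ x ≤ b₂ x)
    (c : ℝ) (hc : 0 < c)
    (u₁ u₂ : ℝ → ℝ)
    (hu₁ : ∀ x, u₁ x = ∫ y in (0:ℝ)..x, Real.exp (-∫ z in (0:ℝ)..y, 2 * b₁ z / a z))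
    (hu₂ : ∀ x, u₂ x = ∫ y in (0:ℝ)..x, Real.exp (-∫ z in (0:ℝ)..y, 2 * b₂ z / a z))
    (x₀ : ℝ)
    (h₁ : IntegrableOn
      (fun x => Real.exp (-∫ z in (0:ℝ)..x, 2 * b₁ z / a z) / (u₁ x - u₁ (x - c)))
      (Ici x₀)) :
    IntegrableOn
      (fun x => Real.exp (-∫ z in (0:ℝ)..x, 2 * b₂ z / a z) / (u₂ x - u₂ (x - c)))
      (Ici x₀) := by
  obtain rfl : u₁ = scale fun z => 2 * b₁ z / a z := funext hu₁
  obtain rfl : u₂ = scale fun z => 2 * b₂ z / a z := funext hu₂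
  have hβ₁ : LocallyIntegrable (fun z => 2 * b₁ z / a z) volume := by
    simpa only [Pi.smul_def, smul_eq_mul, mul_div_assoc] using
      (locallyIntegrable_div_of_continuous_pos ha_cont ha_pos hb₁_meas hb₁_loc).smul (2 : ℝ)
  have hβ₂ : LocallyIntegrable (fun z => 2 * b₂ z / a z) volume := by
    simpa only [Pi.smul_def, smul_eq_mul, mul_div_assoc] using
      (locallyIntegrable_div_of_continuous_pos ha_cont ha_pos hb₂_meas hb₂_loc).smul (2 : ℝ)
  exact integrableOn_downCrossingIntegrand_of_le hβ₁ hβ₂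
    (fun z => div_le_div_of_nonneg_right (by linarith [hb z]) (ha_pos z).le) hc h₁
end

section
/- Let c > 0 and γ ≥ 1. Let b : ℝ → ℝ be locally bounded and measurable with b(x) = (1/(2c))·log x + (γ/c)·log(log x) for all x ≥ 3, and define u(x) = ∫₀ˣ exp(−∫₀ʸ 2b(z) dz) dy. Then there exists a constant K ∈ (0, ∞) such that lim_{x→∞} x·(log x)^{2γ−1} · exp(−∫₀ˣ 2b(y) dy) / (u(x) − u(x − c)) = K; that is, u'(x)/(u(x) − u(x−c)) is asymptotically K / (x·(log x)^{2γ−1}) as x → ∞. -/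
open Real MeasureTheory intervalIntegral Filter Set Asymptotics Topology

/-!
With `F x = ∫₀ˣ 2b`, the denominator factors as `u x - u (x - c) = e^{-F x} I x` where
`I x = ∫₀^c exp (∫_{x-t}^x 2b) dt`, so the quotient is `x (log x)^{2γ-1} / I x`. On `[3, ∞)`
the function `2b = φ` is increasing, which squeezes `I x` between `∫₀^c e^{t φ(x-c)} dt` and
`∫₀^c e^{t φ(x)} dt`. These equal `(s (log s)^{2γ} - 1) / φ(s)` at `s = x - c` and `s = x`,
because `e^{c φ(s)} = s (log s)^{2γ}`; as `φ(s) ~ (log s) / c`, both are `~ c x (log x)^{2γ-1}`,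
and the limit is `K = 1/c`.
-/

lemma intervalIntegrable_of_forall_isCompact_abs_le {b : ℝ → ℝ} (hb : Measurable b)
    (hbdd : ∀ K : Set ℝ, IsCompact K → ∃ M, ∀ x ∈ K, |b x| ≤ M) (a₁ a₂ : ℝ) :
    IntervalIntegrable b volume a₁ a₂ := by
  obtain ⟨M, hM⟩ := hbdd (uIcc a₁ a₂) isCompact_uIcc
  rw [intervalIntegrable_iff]
  refine Measure.integrableOn_of_bounded (M := M) measure_Ioc_lt_top.ne
    hb.aestronglyMeasurable ?_
  exact ae_restrict_of_forall_mem measurableSet_uIoc fun x hx => hM x (uIoc_subset_uIcc hx)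

section Monotone

variable {f : ℝ → ℝ} {a b : ℝ}

lemma MonotoneOn.sub_mul_le_intervalIntegral (hab : a ≤ b) (hf : MonotoneOn f (Icc a b)) :
    (b - a) * f a ≤ ∫ x in a..b, f x := by
  have hfi : IntervalIntegrable f volume a b := (uIcc_of_le hab ▸ hf).intervalIntegrable
  calc (b - a) * f a = ∫ _ in a..b, f a := by simp
    _ ≤ ∫ x in a..b, f x := integral_mono_on hab intervalIntegrable_const hfi
        fun x hx => hf (left_mem_Icc.2 hab) hx hx.1

lemma MonotoneOn.intervalIntegral_le_sub_mul (hab : a ≤ b) (hf : MonotoneOn f (Icc a b)) :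
    ∫ x in a..b, f x ≤ (b - a) * f b := by
  have hfi : IntervalIntegrable f volume a b := (uIcc_of_le hab ▸ hf).intervalIntegrable
  calc ∫ x in a..b, f x ≤ ∫ _ in a..b, f b := integral_mono_on hab hfi intervalIntegrable_const
        fun x hx => hf hx (right_mem_Icc.2 hab) hx.2
    _ = (b - a) * f b := by simp

end Monotone

lemma integral_exp_mul_const (c A : ℝ) (hA : A ≠ 0) :
    ∫ t in (0:ℝ)..c, exp (t * A) = (exp (c * A) - 1) / A := by
  rw [integral_comp_mul_right exp hA]
  simp [integral_exp, div_eq_inv_mul]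

section Primitive

variable {f : ℝ → ℝ}

lemma continuous_integral_sub_left (hf : ∀ a b, IntervalIntegrable f volume a b) (x : ℝ) :
    Continuous fun t => ∫ z in (x - t)..x, f z := by
  have hsub : (fun t => ∫ z in (x - t)..x, f z) =
      fun t => (∫ z in (0:ℝ)..x, f z) - ∫ z in (0:ℝ)..(x - t), f z :=
    funext fun t => (integral_interval_sub_left (hf 0 x) (hf 0 _)).symm
  rw [hsub]
  exact continuous_const.sub ((continuous_primitive hf 0).comp (continuous_const.sub continuous_id))

lemma integral_exp_neg_primitive_sub (hf : ∀ a b, IntervalIntegrable f volume a b) (x c : ℝ) :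
    (∫ y in (0:ℝ)..x, exp (-∫ z in (0:ℝ)..y, f z)) -
        ∫ y in (0:ℝ)..(x - c), exp (-∫ z in (0:ℝ)..y, f z) =
      exp (-∫ z in (0:ℝ)..x, f z) * ∫ t in (0:ℝ)..c, exp (∫ z in (x - t)..x, f z) := by
  set g := fun y => exp (-∫ z in (0:ℝ)..y, f z)
  have hg : Continuous g := continuous_exp.comp (continuous_primitive hf 0).neg
  calc (∫ y in (0:ℝ)..x, g y) - ∫ y in (0:ℝ)..(x - c), g y = ∫ y in (x - c)..x, g y :=
        integral_interval_sub_left (hg.intervalIntegrable _ _) (hg.intervalIntegrable _ _)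
    _ = ∫ t in (0:ℝ)..c, g (x - t) := by rw [integral_comp_sub_left g x, sub_zero]
    _ = _ := by
        rw [← intervalIntegral.integral_const_mul]
        refine integral_congr fun t _ => ?_
        rw [← exp_add, ← integral_interval_sub_left (hf 0 x) (hf 0 (x - t))]
        simp only [g]
        ring_nf

lemma integral_exp_mul_le_integral_exp_integral (hf : ∀ a b, IntervalIntegrable f volume a b)
    {x c : ℝ} (hc : 0 ≤ c) (hmono : MonotoneOn f (Icc (x - c) x)) :
    ∫ t in (0:ℝ)..c, exp (t * f (x - c)) ≤ ∫ t in (0:ℝ)..c, exp (∫ z in (x - t)..x, f z) := by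
  refine integral_mono_on hc
    ((by fun_prop : Continuous fun t => exp (t * f (x - c))).intervalIntegrable 0 c)
    ((continuous_integral_sub_left hf x).rexp.intervalIntegrable 0 c) fun t ht => ?_
  have hsub : MonotoneOn f (Icc (x - t) x) :=
    hmono.mono (Icc_subset_Icc (by linarith [ht.2]) le_rfl)
  have hft : f (x - c) ≤ f (x - t) :=
    hmono ⟨le_rfl, by linarith [ht.1]⟩ ⟨by linarith [ht.2], by linarith [ht.1]⟩ (by linarith [ht.2])
  calc exp (t * f (x - c)) ≤ exp (t * f (x - t)) := by gcongr; exact ht.1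
    _ ≤ exp (∫ z in (x - t)..x, f z) := by
        simpa using hsub.sub_mul_le_intervalIntegral (by linarith [ht.1])

lemma integral_exp_integral_le_integral_exp_mul (hf : ∀ a b, IntervalIntegrable f volume a b)
    {x c : ℝ} (hc : 0 ≤ c) (hmono : MonotoneOn f (Icc (x - c) x)) :
    ∫ t in (0:ℝ)..c, exp (∫ z in (x - t)..x, f z) ≤ ∫ t in (0:ℝ)..c, exp (t * f x) := by
  refine integral_mono_on hc
    ((continuous_integral_sub_left hf x).rexp.intervalIntegrable 0 c)
    ((by fun_prop : Continuous fun t => exp (t * f x)).intervalIntegrable 0 c) fun t ht => ?_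
  have hsub : MonotoneOn f (Icc (x - t) x) :=
    hmono.mono (Icc_subset_Icc (by linarith [ht.2]) le_rfl)
  simpa using hsub.intervalIntegral_le_sub_mul (by linarith [ht.1])

end Primitive

/-- The function `2 b` on `[3, ∞)`. -/
noncomputable def logDrift (c γ s : ℝ) : ℝ :=
  (1 / c) * log s + (2 * γ / c) * log (log s)

section LogDrift

variable {c γ : ℝ}

lemma logDrift_monotoneOn (hc : 0 < c) (hγ : 0 ≤ γ) : MonotoneOn (logDrift c γ) (Ioi 1) := by
  intro s hs t ht hst
  have hlog : log s ≤ log t := log_le_log (by linarith [mem_Ioi.1 hs]) hst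
  have hlog_pos : 0 < log s := log_pos hs
  unfold logDrift
  gcongr

lemma tendsto_logDrift_atTop (hc : 0 < c) (hγ : 0 ≤ γ) : Tendsto (logDrift c γ) atTop atTop :=
  (tendsto_log_atTop.const_mul_atTop (by positivity)).atTop_add_zero_eventuallyLE <| by
    filter_upwards [(tendsto_log_atTop.comp tendsto_log_atTop).eventually_ge_atTop 0] with s hs
    exact mul_nonneg (by positivity) hs

lemma tendsto_log_div_logDrift (hc : 0 < c) :
    Tendsto (fun s => log s / logDrift c γ s) atTop (𝓝 c) := by
  have hratio : Tendsto (fun s => logDrift c γ s / log s) atTop (𝓝 (1 / c)) := by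
    have hll : Tendsto (fun s => log (log s) / log s) atTop (𝓝 0) :=
      isLittleO_log_id_atTop.tendsto_div_nhds_zero.comp tendsto_log_atTop
    have hlim := (tendsto_const_nhds (x := 1 / c)).add (hll.const_mul (2 * γ / c))
    rw [mul_zero, add_zero] at hlim
    refine hlim.congr' ?_
    filter_upwards [tendsto_log_atTop.eventually_gt_atTop 0] with s hs
    unfold logDrift
    field_simp
  simpa using hratio.inv₀ (by positivity)

lemma exp_mul_logDrift (hc : c ≠ 0) {s : ℝ} (hs : 1 < s) :
    exp (c * logDrift c γ s) = s * log s ^ (2 * γ) := by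
  calc exp (c * logDrift c γ s) = exp (log s + log (log s) * (2 * γ)) := by
        unfold logDrift
        field_simp
    _ = s * log s ^ (2 * γ) := by
        rw [exp_add, exp_log (by linarith), rpow_def_of_pos (log_pos hs)]

lemma tendsto_integral_exp_mul_logDrift_div (hc : 0 < c) (hγ : 0 ≤ γ) :
    Tendsto (fun s => (∫ t in (0:ℝ)..c, exp (t * logDrift c γ s)) / (s * log s ^ (2 * γ - 1)))
      atTop (𝓝 c) := by
  have hφ := tendsto_logDrift_atTop hc hγ
  have hexp : Tendsto (fun s => 1 - exp (-(c * logDrift c γ s))) atTop (𝓝 1) := by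
    simpa using tendsto_const_nhds.sub
      (tendsto_exp_neg_atTop_nhds_zero.comp (hφ.const_mul_atTop hc))
  have hlim := hexp.mul (tendsto_log_div_logDrift hc (γ := γ))
  rw [one_mul] at hlim
  refine hlim.congr' ?_
  filter_upwards [hφ.eventually_gt_atTop 0, eventually_gt_atTop 3] with s hφs hs
  have hlog_pos : 0 < log s := log_pos (by linarith)
  rw [integral_exp_mul_const c _ hφs.ne', exp_neg, exp_mul_logDrift hc.ne' (by linarith),
    rpow_sub hlog_pos, rpow_one]
  have : 0 < s * log s ^ (2 * γ) := by positivity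
  field_simp

end LogDrift

lemma tendsto_sub_mul_log_rpow_div (d p : ℝ) :
    Tendsto (fun x => (x - d) * log (x - d) ^ p / (x * log x ^ p)) atTop (𝓝 1) := by
  have hlin : (fun x : ℝ => x - d) ~[atTop] id := by
    simpa [sub_eq_add_neg] using
      (IsEquivalent.refl (u := (id : ℝ → ℝ))).add_const_of_norm_tendsto_atTop (c := -d)
        (tendsto_norm_atTop_atTop.comp tendsto_id)
  have hlog : (fun x => log (x - d)) ~[atTop] log := hlin.log tendsto_id
  have hlin' := (isEquivalent_iff_tendsto_one (eventually_ne_atTop 0)).1 hlin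
  have hlog' := (isEquivalent_iff_tendsto_one
    (tendsto_log_atTop.eventually_ne_atTop 0)).1 hlog
  have hlim := hlin'.mul (hlog'.rpow_const (p := p) (Or.inl one_ne_zero))
  rw [one_rpow, one_mul] at hlim
  refine hlim.congr' ?_
  filter_upwards [eventually_gt_atTop (d + 1), eventually_gt_atTop 1] with x hxd hx
  have hlog_pos : 0 < log (x - d) := log_pos (by linarith)
  simp only [Pi.div_apply]
  rw [div_rpow hlog_pos.le (log_pos hx).le, mul_div_mul_comm]

theorem tendsto_integral_exp_integral_div {c γ : ℝ} (hc : 0 < c) (hγ : 0 ≤ γ) {f : ℝ → ℝ}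
    (hf : ∀ a b, IntervalIntegrable f volume a b) (hfφ : ∀ᶠ z in atTop, f z = logDrift c γ z) :
    Tendsto (fun x => (∫ t in (0:ℝ)..c, exp (∫ z in (x - t)..x, f z)) / (x * log x ^ (2 * γ - 1)))
      atTop (𝓝 c) := by
  set J := fun s => ∫ t in (0:ℝ)..c, exp (t * logDrift c γ s)
  set den := fun x : ℝ => x * log x ^ (2 * γ - 1)
  have hupper : Tendsto (fun x => J x / den x) atTop (𝓝 c) :=
    tendsto_integral_exp_mul_logDrift_div hc hγ
  have hlower : Tendsto (fun x => J (x - c) / den x) atTop (𝓝 c) := by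
    have hlim := (hupper.comp (tendsto_atTop_add_const_right _ (-c) tendsto_id)).mul
      (tendsto_sub_mul_log_rpow_div c (2 * γ - 1))
    rw [mul_one] at hlim
    refine hlim.congr' ?_
    filter_upwards [eventually_gt_atTop (c + 1)] with x hx
    have hden : den (x - c) ≠ 0 :=
      (mul_pos (by linarith) (rpow_pos_of_pos (log_pos (by linarith)) _)).ne'
    simp only [Function.comp_apply, id, ← sub_eq_add_neg]
    exact div_mul_div_cancel₀ hden
  obtain ⟨N, hN⟩ := eventually_atTop.1 hfφ
  have hmono : ∀ x, max N 2 + c ≤ x → MonotoneOn f (Icc (x - c) x) := fun x hx =>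
    ((logDrift_monotoneOn hc hγ).mono fun z hz => by
        simp only [mem_Ioi]; linarith [hz.1, le_max_right N 2]).congr
      fun z hz => (hN z (by linarith [hz.1, le_max_left N 2])).symm
  have hden : ∀ᶠ x in atTop, 0 ≤ den x := by
    filter_upwards [eventually_ge_atTop 1] with x hx
    exact mul_nonneg (by linarith) (rpow_nonneg (log_nonneg hx) _)
  refine tendsto_of_tendsto_of_tendsto_of_le_of_le' hlower hupper ?_ ?_ <;>
    filter_upwards [hden, eventually_ge_atTop (max N 2 + c)] with x hden hx
  · have hle := integral_exp_mul_le_integral_exp_integral hf hc.le (hmono x hx)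
    rw [hN (x - c) (by linarith [le_max_left N 2])] at hle
    exact div_le_div_of_nonneg_right hle hden
  · have hle := integral_exp_integral_le_integral_exp_mul hf hc.le (hmono x hx)
    rw [hN x (by linarith [le_max_left N 2])] at hle
    exact div_le_div_of_nonneg_right hle hden

/-- For the drift `b(x) = (1/(2c))·log x + (γ/c)·log log x` (for large `x`),
`u'(x)/(u(x) − u(x−c))` is asymptotically `K/(x (log x)^{2γ−1})` for some constant
`K ∈ (0,∞)` (l'Hôpital computation in the proof of Theorem 2). -/
theorem criterion_integrand_asymptotics
    (c γ : ℝ) (hc : 0 < c) (hγ : 1 ≤ γ)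
    (b : ℝ → ℝ) (hb_meas : Measurable b)
    (hb_loc : ∀ K : Set ℝ, IsCompact K → ∃ M, ∀ x ∈ K, |b x| ≤ M)
    (hb : ∀ x : ℝ, 3 ≤ x →
      b x = (1 / (2 * c)) * Real.log x + (γ / c) * Real.log (Real.log x))
    (u : ℝ → ℝ)
    (hu : ∀ x, u x = ∫ y in (0:ℝ)..x, Real.exp (-∫ z in (0:ℝ)..y, 2 * b z)) :
    ∃ K : ℝ, 0 < K ∧
      Tendsto
        (fun x : ℝ =>
          x * Real.log x ^ (2 * γ - 1) *
            Real.exp (-∫ y in (0:ℝ)..x, 2 * b y) / (u x - u (x - c)))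
        atTop (nhds K) := by
  have hint (a₁ a₂ : ℝ) : IntervalIntegrable (fun z => 2 * b z) volume a₁ a₂ :=
    (intervalIntegrable_of_forall_isCompact_abs_le hb_meas hb_loc a₁ a₂).const_mul 2
  have hφ : ∀ᶠ z in atTop, 2 * b z = logDrift c γ z := by
    filter_upwards [eventually_ge_atTop 3] with z hz
    rw [hb z hz, logDrift]
    ring
  refine ⟨c⁻¹, inv_pos.2 hc, ?_⟩
  refine ((tendsto_integral_exp_integral_div hc (by linarith) hint hφ).inv₀ hc.ne').congr
    fun x => ?_
  rw [hu, hu, integral_exp_neg_primitive_sub hint, inv_div, mul_comm (exp _),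
    mul_div_mul_right _ _ (exp_pos _).ne']
end

section
/- Let c > 0 and γ > 1. Let b : ℝ → ℝ be locally bounded and measurable with b(x) = (1/(2c))·log x + (γ/c)·log(log x) for all x ≥ 3, and define u(x) = ∫₀ˣ exp(−∫₀ʸ 2b(z) dz) dy. Then ∫_3^∞ exp(−∫₀ˣ 2b(y) dy) / (u(x) − u(x − c)) dx < ∞. -/
open Real MeasureTheory intervalIntegral Set

/-!
Write `β = 2b` and `s = x - c`. Past `3` the drift is nondecreasing, so on the window
`[s, s + 1/β s]` the scale density `u' = exp (-∫ β)` stays above its value at the right end of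
the window, while from there to `x` the exponent drops by at least `(c - 1/β s) β s`. Hence
`u' x / (u x - u (x - c)) ≤ β s * exp (1 - c β s)`. For the critical drift
`c β s = log s + 2γ log log s`, so this is `O((log s) ^ (1 - 2γ) / s)`, which is integrable at
infinity because `2γ - 1 > 1`.
-/

theorem intervalIntegrable_of_measurable_of_bounded_on_compacts {f : ℝ → ℝ} (hf : Measurable f)
    (hloc : ∀ K : Set ℝ, IsCompact K → ∃ M, ∀ x ∈ K, |f x| ≤ M) (p q : ℝ) :
    IntervalIntegrable f volume p q := by
  obtain ⟨M, hM⟩ := hloc (uIcc p q) isCompact_uIcc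
  rw [intervalIntegrable_iff]
  refine (Measure.integrableOn_of_bounded (M := M) isCompact_uIcc.measure_lt_top.ne
    hf.aestronglyMeasurable ?_).mono_set uIoc_subset_uIcc
  exact ae_restrict_of_forall_mem measurableSet_uIcc hM

theorem integrableOn_Ici_of_continuous_of_norm_le {f g : ℝ → ℝ} {a b : ℝ} (hf : Continuous f)
    (hab : a ≤ b) (hg : IntegrableOn g (Ioi b)) (hfg : ∀ x ∈ Ioi b, ‖f x‖ ≤ g x) :
    IntegrableOn f (Ici a) := by
  rw [← Icc_union_Ioi_eq_Ici hab]
  exact hf.continuousOn.integrableOn_Icc.union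
    (hg.mono' hf.aestronglyMeasurable.restrict (ae_restrict_of_forall_mem measurableSet_Ioi hfg))

theorem integrableOn_log_rpow_div {q a : ℝ} (hq : q < -1) (ha : 1 < a) :
    IntegrableOn (fun x => log x ^ q / x) (Ioi a) := by
  have hq1 : q + 1 ≠ 0 := by linarith
  refine integrableOn_Ioi_deriv_of_nonneg' (g := fun x => log x ^ (q + 1) / (q + 1))
    (fun x hx => ?_) (fun x hx => ?_) (l := 0) ?_
  · have hL : 0 < log x := log_pos (ha.trans_le hx)
    refine (((hasDerivAt_log (by linarith [mem_Ici.1 hx])).rpow_const (p := q + 1)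
      (Or.inl hL.ne')).div_const (q + 1)).congr_deriv ?_
    rw [add_sub_cancel_right]
    field_simp
  · have hL : 0 < log x := log_pos (ha.trans hx)
    have : 0 < x := by linarith [mem_Ioi.1 hx]
    positivity
  · simpa using ((tendsto_rpow_neg_atTop (y := -(q + 1)) (by linarith)).comp
      tendsto_log_atTop).div_const (q + 1)

theorem integrableOn_log_sub_rpow_div_sub (c : ℝ) {q a : ℝ} (hq : q < -1) (ha : 1 < a) :
    IntegrableOn (fun x => log (x - c) ^ q / (x - c)) (Ioi (a + c)) := by
  rw [← preimage_sub_const_Ioi]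
  exact ((measurePreserving_sub_right volume c).integrableOn_comp_preimage
    (measurableEmbedding_subRight c)).2 (integrableOn_log_rpow_div hq ha)

section ScaleFunction

noncomputable def scaleFunction (β : ℝ → ℝ) (a x : ℝ) : ℝ :=
  ∫ y in a..x, exp (-∫ z in a..y, β z)

variable {β : ℝ → ℝ} {a s t c : ℝ}

theorem continuous_exp_neg_primitive (hβ : ∀ p q, IntervalIntegrable β volume p q) :
    Continuous fun y => exp (-∫ z in a..y, β z) :=
  (continuous_primitive hβ a).neg.rexp

theorem continuous_scaleFunction (hβ : ∀ p q, IntervalIntegrable β volume p q) :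
    Continuous (scaleFunction β a) :=
  continuous_primitive (fun _ _ => (continuous_exp_neg_primitive hβ).intervalIntegrable _ _) a

theorem scaleFunction_sub_scaleFunction (hβ : ∀ p q, IntervalIntegrable β volume p q) (s t : ℝ) :
    scaleFunction β a t - scaleFunction β a s = ∫ y in s..t, exp (-∫ z in a..y, β z) :=
  integral_interval_sub_left ((continuous_exp_neg_primitive hβ).intervalIntegrable _ _)
    ((continuous_exp_neg_primitive hβ).intervalIntegrable _ _)

theorem scaleFunction_sub_pos (hβ : ∀ p q, IntervalIntegrable β volume p q) (hst : s < t) :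
    0 < scaleFunction β a t - scaleFunction β a s := by
  rw [scaleFunction_sub_scaleFunction hβ]
  exact intervalIntegral_pos_of_pos_on ((continuous_exp_neg_primitive hβ).intervalIntegrable _ _)
    (fun y _ => exp_pos _) hst

theorem integral_le_integral_of_nonneg_on (hβ : ∀ p q, IntervalIntegrable β volume p q)
    (hst : s ≤ t) (hnn : ∀ z ∈ Icc s t, 0 ≤ β z) :
    ∫ z in a..s, β z ≤ ∫ z in a..t, β z := by
  rw [← integral_add_adjacent_intervals (hβ a s) (hβ s t)]
  linarith [integral_nonneg (μ := volume) hst hnn]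

theorem mul_exp_neg_integral_le_integral (hβ : ∀ p q, IntervalIntegrable β volume p q)
    (hst : s ≤ t) (hnn : ∀ z ∈ Icc s t, 0 ≤ β z) :
    (t - s) * exp (-∫ z in a..t, β z) ≤ ∫ y in s..t, exp (-∫ z in a..y, β z) := by
  have hle : ∀ y ∈ Icc s t, exp (-∫ z in a..t, β z) ≤ exp (-∫ z in a..y, β z) :=
    fun y hy => exp_le_exp.2 <| neg_le_neg <| integral_le_integral_of_nonneg_on hβ hy.2
      fun z hz => hnn z ⟨hy.1.trans hz.1, hz.2⟩
  simpa using integral_mono_on (μ := volume) hst intervalIntegrable_const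
    ((continuous_exp_neg_primitive hβ).intervalIntegrable s t) hle

theorem exp_neg_integral_le_mul_integral (hβ : ∀ p q, IntervalIntegrable β volume p q)
    (hmono : MonotoneOn β (Ici s)) (hpos : 0 < β s) (hc : 1 ≤ c * β s) :
    exp (-∫ z in a..s + c, β z) ≤
      β s * exp (1 - c * β s) * ∫ y in s..s + c, exp (-∫ z in a..y, β z) := by
  set μ := β s
  set δ := μ⁻¹
  have hδ : 0 < δ := inv_pos.2 hpos
  have hδμ : δ * μ = 1 := inv_mul_cancel₀ hpos.ne'
  have hδc : δ ≤ c := by rw [inv_le_iff_one_le_mul₀ hpos]; linarith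
  have hμle : ∀ z ∈ Ici s, μ ≤ β z := fun z hz => hmono self_mem_Ici hz hz
  have htail : (c - δ) * μ ≤ ∫ z in s + δ..s + c, β z := by
    simpa using integral_mono_on (by linarith) intervalIntegrable_const (hβ _ _)
      fun z (hz : z ∈ Icc (s + δ) (s + c)) => hμle z (by simp only [mem_Ici]; linarith [hz.1])
  have hwindow : δ * exp (-∫ z in a..s + δ, β z) ≤ ∫ y in s..s + c, exp (-∫ z in a..y, β z) :=
    calc δ * exp (-∫ z in a..s + δ, β z)
        = (s + δ - s) * exp (-∫ z in a..s + δ, β z) := by ring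
      _ ≤ ∫ y in s..s + δ, exp (-∫ z in a..y, β z) :=
          mul_exp_neg_integral_le_integral hβ (by linarith)
            fun z hz => hpos.le.trans (hμle z hz.1)
      _ ≤ ∫ y in s..s + c, exp (-∫ z in a..y, β z) :=
          integral_mono_interval le_rfl (by linarith) (by linarith)
            (Filter.Eventually.of_forall fun y => (exp_pos _).le)
            ((continuous_exp_neg_primitive hβ).intervalIntegrable _ _)
  calc exp (-∫ z in a..s + c, β z)
      = exp (-∫ z in a..s + δ, β z) * exp (-∫ z in s + δ..s + c, β z) := by
        rw [← integral_add_adjacent_intervals (hβ a (s + δ)) (hβ _ _), neg_add, exp_add]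
    _ ≤ exp (-∫ z in a..s + δ, β z) * exp (1 - c * μ) := by
        gcongr
        linarith
    _ = μ * exp (1 - c * μ) * (δ * exp (-∫ z in a..s + δ, β z)) := by
        linear_combination (-(exp (-∫ z in a..s + δ, β z) * exp (1 - c * μ))) * hδμ
    _ ≤ μ * exp (1 - c * μ) * ∫ y in s..s + c, exp (-∫ z in a..y, β z) := by
        gcongr

theorem exp_neg_integral_div_scaleFunction_sub_le (hβ : ∀ p q, IntervalIntegrable β volume p q)
    (hmono : MonotoneOn β (Ici s)) (hpos : 0 < β s) (hc : 1 ≤ c * β s) :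
    exp (-∫ z in a..s + c, β z) / (scaleFunction β a (s + c) - scaleFunction β a s) ≤
      β s * exp (1 - c * β s) := by
  have hc0 : 0 < c := pos_of_mul_pos_left (by linarith) hpos.le
  rw [div_le_iff₀ (scaleFunction_sub_pos hβ (by linarith)), scaleFunction_sub_scaleFunction hβ]
  exact exp_neg_integral_le_mul_integral hβ hmono hpos hc

end ScaleFunction

section CriticalDrift

noncomputable def criticalDrift (c γ x : ℝ) : ℝ := (1 / (2 * c)) * log x + (γ / c) * log (log x)

variable {c γ : ℝ}

theorem mul_two_mul_criticalDrift (hc : c ≠ 0) (x : ℝ) :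
    c * (2 * criticalDrift c γ x) = log x + 2 * γ * log (log x) := by
  unfold criticalDrift
  field_simp

theorem monotoneOn_criticalDrift (hc : 0 < c) (hγ : 0 ≤ γ) :
    MonotoneOn (criticalDrift c γ) (Ioi 1) := by
  intro x hx y hy hxy
  have hlog : log x ≤ log y := log_le_log (zero_lt_one.trans hx) hxy
  have : log (log x) ≤ log (log y) := log_le_log (log_pos hx) hlog
  unfold criticalDrift
  gcongr

theorem one_le_mul_two_mul_criticalDrift (hc : 0 < c) (hγ : 0 ≤ γ) {x : ℝ} (hx : 3 ≤ x) :
    1 ≤ c * (2 * criticalDrift c γ x) := by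
  have hL : 1 ≤ log x := by
    rw [le_log_iff_exp_le (by linarith)]
    linarith [exp_one_lt_d9]
  have : 0 ≤ log (log x) := log_nonneg hL
  rw [mul_two_mul_criticalDrift hc.ne']
  nlinarith

theorem two_mul_criticalDrift_mul_exp_le (hc : 0 < c) (hγ : 0 ≤ γ) {x : ℝ} (hx : 1 < x) :
    2 * criticalDrift c γ x * exp (1 - c * (2 * criticalDrift c γ x)) ≤
      exp 1 * (1 + 2 * γ) / c * (log x ^ (1 - 2 * γ) / x) := by
  have hL : 0 < log x := log_pos hx
  have hcμ := mul_two_mul_criticalDrift (γ := γ) hc.ne' x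
  have hμ : 2 * criticalDrift c γ x ≤ (1 + 2 * γ) / c * log x := by
    have : log (log x) ≤ log x := (log_le_sub_one_of_pos hL).trans (by linarith)
    rw [div_mul_eq_mul_div, le_div_iff₀ hc, mul_comm, hcμ]
    nlinarith
  have hexp : exp (1 - c * (2 * criticalDrift c γ x)) = exp 1 * (log x ^ (-(2 * γ)) / x) := by
    rw [hcμ, rpow_def_of_pos hL, div_eq_mul_inv, ← exp_log (by linarith : 0 < x), ← exp_neg,
      ← exp_add, ← exp_add, exp_log (by linarith : 0 < x)]
    ring_nf
  calc 2 * criticalDrift c γ x * exp (1 - c * (2 * criticalDrift c γ x))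
      ≤ (1 + 2 * γ) / c * log x * (exp 1 * (log x ^ (-(2 * γ)) / x)) := by
        rw [hexp]; gcongr
    _ = exp 1 * (1 + 2 * γ) / c * (log x ^ (1 - 2 * γ) / x) := by
        rw [sub_eq_add_neg, rpow_add hL, rpow_one]; ring

end CriticalDrift

/-- For `b(x) = (1/(2c))·log x + (γ/c)·log log x` with `γ > 1`, the down-crossing
criterion integral `∫^∞ u'(x)/(u(x) − u(x−c)) dx` is finite. -/
theorem criterion_finite_for_critical_drift
    (c γ : ℝ) (hc : 0 < c) (hγ : 1 < γ)
    (b : ℝ → ℝ) (hb_meas : Measurable b)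
    (hb_loc : ∀ K : Set ℝ, IsCompact K → ∃ M, ∀ x ∈ K, |b x| ≤ M)
    (hb : ∀ x : ℝ, 3 ≤ x →
      b x = (1 / (2 * c)) * Real.log x + (γ / c) * Real.log (Real.log x))
    (u : ℝ → ℝ)
    (hu : ∀ x, u x = ∫ y in (0:ℝ)..x, Real.exp (-∫ z in (0:ℝ)..y, 2 * b z)) :
    IntegrableOn
      (fun x => Real.exp (-∫ y in (0:ℝ)..x, 2 * b y) / (u x - u (x - c)))
      (Ici (3:ℝ)) := by
  obtain rfl : u = scaleFunction (fun z => 2 * b z) 0 := funext hu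
  have hγ0 : 0 ≤ γ := by linarith
  have hb' : EqOn b (criticalDrift c γ) (Ici 3) := hb
  have hβ : ∀ p q, IntervalIntegrable (fun z => 2 * b z) volume p q := fun p q =>
    (intervalIntegrable_of_measurable_of_bounded_on_compacts hb_meas hb_loc p q).const_mul 2
  have hmono : MonotoneOn (fun z => 2 * b z) (Ici 3) :=
    (monotone_mul_left_of_nonneg zero_le_two).comp_monotoneOn
      (((monotoneOn_criticalDrift hc hγ0).mono (Ici_subset_Ioi.2 (by norm_num))).congr hb'.symm)
  have hgap_pos : ∀ x, 0 < scaleFunction _ 0 x - scaleFunction _ 0 (x - c) :=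
    fun x => scaleFunction_sub_pos hβ (by linarith)
  refine integrableOn_Ici_of_continuous_of_norm_le
    ((continuous_exp_neg_primitive hβ).div ((continuous_scaleFunction hβ).sub
      ((continuous_scaleFunction hβ).comp (continuous_sub_right c))) fun x => (hgap_pos x).ne')
    (le_add_of_nonneg_right hc.le)
    ((integrableOn_log_sub_rpow_div_sub c (by linarith : 1 - 2 * γ < -1) (by norm_num)).const_mul
      (exp 1 * (1 + 2 * γ) / c)) fun x hx => ?_
  have hs : 3 < x - c := by linarith [mem_Ioi.1 hx]
  have hdrift : 2 * b (x - c) = 2 * criticalDrift c γ (x - c) := by rw [hb' hs.le]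
  have hlow : 1 ≤ c * (2 * b (x - c)) := hdrift ▸ one_le_mul_two_mul_criticalDrift hc hγ0 hs.le
  have hratio := exp_neg_integral_div_scaleFunction_sub_le (a := 0) hβ
    (hmono.mono (Ici_subset_Ici.2 hs.le)) (pos_of_mul_pos_right (by linarith) hc.le) hlow
  rw [sub_add_cancel, hdrift] at hratio
  rw [norm_of_nonneg (div_pos (exp_pos _) (hgap_pos x)).le]
  exact hratio.trans (two_mul_criticalDrift_mul_exp_le hc hγ0 (by linarith))
end

section
/- Let c > 0 and let b : ℝ → ℝ be locally bounded and measurable. Suppose there exist γ > 1 and x₀ ≥ 3 such that b(x) ≥ (1/(2c))·log x + (γ/c)·log(log x) for all x ≥ x₀. Define u(x) = ∫₀ˣ exp(−∫₀ʸ 2b(z) dz) dy. Then ∫_{x₀}^∞ exp(−∫₀ˣ 2b(y) dy) / (u(x) − u(x − c)) dx < ∞. -/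
/-!
Write `F x = ∫₀ˣ 2b`, so that `u(x) - u(x - c) = ∫_{x-c}^x e^{-F}`. Past `x₀` the drift bound
makes `F` grow with slope at least `k = 2φ(x - c)` on the window `[x - c, x]`, where
`φ t = (1/(2c)) log t + (γ/c) log log t`; hence on the first `1/k` of the window
`e^{-F} ≥ e^{-F x} e^{kc - 1}`, and the integrand is at most `k e^{1 - kc}`. The threshold is
chosen so that `e^{2cφ(t)} = t (log t)^{2γ}`, which turns this into `O(1 / (t (log t)^{2γ - 1}))`
with `t = x - c`, integrable at infinity exactly because `γ > 1`.
-/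

open Real MeasureTheory intervalIntegral Set Filter Topology

lemma intervalIntegrable_of_forall_isCompact_bdd {b : ℝ → ℝ}
    (hb_meas : AEStronglyMeasurable b volume)
    (hb_loc : ∀ K : Set ℝ, IsCompact K → ∃ M, ∀ x ∈ K, |b x| ≤ M) (a₁ a₂ : ℝ) :
    IntervalIntegrable b volume a₁ a₂ := by
  obtain ⟨M, hM⟩ := hb_loc _ isCompact_uIcc
  refine (Measure.integrableOn_of_bounded measure_Icc_lt_top.ne hb_meas (M := M)
    ?_).intervalIntegrable
  exact (ae_restrict_iff' measurableSet_uIcc).2 (ae_of_all _ hM)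

lemma mul_sub_le_integral_of_le {f : ℝ → ℝ} {k a b : ℝ} (hab : a ≤ b)
    (hf : IntervalIntegrable f volume a b) (hk : ∀ w ∈ Icc a b, k ≤ f w) :
    k * (b - a) ≤ ∫ w in a..b, f w :=
  calc k * (b - a) = ∫ _ in a..b, k := by simp [mul_comm]
    _ ≤ ∫ w in a..b, f w := integral_mono_on hab intervalIntegrable_const hf hk

lemma exp_neg_div_integral_le {F : ℝ → ℝ} {x c k : ℝ}
    (hF : IntervalIntegrable (fun y => exp (-F y)) volume (x - c) x) (hk : 0 < k)
    (hkc : 1 ≤ k * c) (hslope : ∀ y ∈ Icc (x - c) x, k * (x - y) ≤ F x - F y) :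
    exp (-F x) / ∫ y in (x - c)..x, exp (-F y) ≤ k * exp (1 - k * c) := by
  have hδc : k⁻¹ ≤ c := by rwa [inv_le_iff_one_le_mul₀' hk]
  have hδ : 0 < k⁻¹ := inv_pos.2 hk
  have hnear : ∀ y ∈ Icc (x - c) (x - c + k⁻¹),
      exp (-F x) * exp (k * c - 1) ≤ exp (-F y) := by
    intro y hy
    have hgap : k * c - 1 ≤ k * (x - y) := by
      have := mul_le_mul_of_nonneg_left (show c - k⁻¹ ≤ x - y by linarith [hy.2]) hk.le
      rwa [mul_sub, mul_inv_cancel₀ hk.ne'] at this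
    rw [← exp_add, exp_le_exp]
    linarith [hslope y ⟨hy.1, by linarith [hy.2]⟩]
  have hlower : k⁻¹ * (exp (-F x) * exp (k * c - 1)) ≤ ∫ y in (x - c)..x, exp (-F y) :=
    calc k⁻¹ * (exp (-F x) * exp (k * c - 1))
        = ∫ _ in (x - c)..(x - c + k⁻¹), exp (-F x) * exp (k * c - 1) := by
          simp only [intervalIntegral.integral_const, smul_eq_mul, add_sub_cancel_left]
      _ ≤ ∫ y in (x - c)..(x - c + k⁻¹), exp (-F y) :=
        integral_mono_on (by simpa using hk.le) intervalIntegrable_const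
          (hF.mono_set (uIcc_subset_uIcc left_mem_uIcc
            (by rw [uIcc_of_le (by linarith)]; constructor <;> linarith))) hnear
      _ ≤ ∫ y in (x - c)..x, exp (-F y) :=
        integral_mono_interval le_rfl (by simpa using hk.le) (by linarith)
          (ae_of_all _ fun y => (exp_pos _).le) hF
  calc exp (-F x) / ∫ y in (x - c)..x, exp (-F y)
      ≤ exp (-F x) / (k⁻¹ * (exp (-F x) * exp (k * c - 1))) :=
        div_le_div_of_nonneg_left (exp_pos _).le (by positivity) hlower
    _ = k * exp (1 - k * c) := by
        rw [show 1 - k * c = -(k * c - 1) by ring, exp_neg]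
        field_simp
        rw [← exp_add, add_neg_cancel, exp_zero]

noncomputable def driftThreshold (c γ t : ℝ) : ℝ := 1 / (2 * c) * log t + γ / c * log (log t)

section driftThreshold

variable {c γ t : ℝ}

lemma driftThreshold_monotoneOn (hc : 0 ≤ c) (hγ : 0 ≤ γ) :
    MonotoneOn (driftThreshold c γ) (Ioi 1) := by
  intro s hs t ht hst
  have hs0 : 0 < log s := log_pos hs
  have hlog : log s ≤ log t := log_le_log (by linarith [mem_Ioi.1 hs]) hst
  unfold driftThreshold
  gcongr

lemma two_mul_driftThreshold_mul (hc : c ≠ 0) :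
    2 * driftThreshold c γ t * c = log t + 2 * γ * log (log t) := by
  unfold driftThreshold
  field_simp

lemma exp_two_mul_driftThreshold_mul (hc : c ≠ 0) (ht : 1 < t) :
    exp (2 * driftThreshold c γ t * c) = t * log t ^ (2 * γ) := by
  rw [two_mul_driftThreshold_mul hc, exp_add, exp_log (by linarith),
    rpow_def_of_pos (log_pos ht), mul_comm (log (log t))]

lemma one_le_two_mul_driftThreshold_mul (hc : 0 < c) (hγ : 0 ≤ γ) (ht : exp 1 ≤ t) :
    1 ≤ 2 * driftThreshold c γ t * c := by
  have hlog : 1 ≤ log t := by rwa [le_log_iff_exp_le (by linarith [exp_pos 1])]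
  rw [two_mul_driftThreshold_mul hc.ne']
  have := log_nonneg hlog
  nlinarith

lemma two_mul_driftThreshold_le (hc : 0 < c) (hγ : 0 ≤ γ) (ht : 1 ≤ t) :
    2 * driftThreshold c γ t ≤ (1 + 2 * γ) / c * log t := by
  have hloglog : log (log t) ≤ log t := log_le_self (log_nonneg ht)
  rw [← mul_le_mul_iff_of_pos_right hc, two_mul_driftThreshold_mul hc.ne']
  field_simp
  nlinarith

lemma two_mul_driftThreshold_mul_exp_le (hc : 0 < c) (hγ : 0 ≤ γ) (ht : 1 < t) :
    2 * driftThreshold c γ t * exp (1 - 2 * driftThreshold c γ t * c)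
      ≤ exp 1 * (1 + 2 * γ) / c * (t * log t ^ (2 * γ - 1))⁻¹ := by
  have hL : 0 < log t := log_pos ht
  have hpow : log t ^ (2 * γ) = log t ^ (2 * γ - 1) * log t := by
    rw [← rpow_add_one hL.ne', sub_add_cancel]
  rw [exp_sub, exp_two_mul_driftThreshold_mul hc.ne' ht, hpow]
  calc 2 * driftThreshold c γ t * (exp 1 / (t * (log t ^ (2 * γ - 1) * log t)))
      ≤ (1 + 2 * γ) / c * log t * (exp 1 / (t * (log t ^ (2 * γ - 1) * log t))) := by
        refine mul_le_mul_of_nonneg_right (two_mul_driftThreshold_le hc hγ ht.le) ?_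
        exact div_nonneg (exp_pos 1).le
          (mul_pos (by linarith) (mul_pos (rpow_pos_of_pos hL _) hL)).le
    _ = exp 1 * (1 + 2 * γ) / c * (t * log t ^ (2 * γ - 1))⁻¹ := by
        field_simp

end driftThreshold

lemma integrableOn_inv_mul_log_rpow_Ioi {a p : ℝ} (ha : 1 < a) (hp : 1 < p) :
    IntegrableOn (fun t => (t * log t ^ p)⁻¹) (Ioi a) := by
  have hderiv : ∀ t ∈ Ici a,
      HasDerivAt (fun s => -(p - 1)⁻¹ * log s ^ (1 - p)) (t * log t ^ p)⁻¹ t := by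
    intro t ht
    have ht1 : 1 < t := ha.trans_le ht
    have hL : 0 < log t := log_pos ht1
    refine (((hasDerivAt_log (by linarith : t ≠ 0)).rpow_const
      (p := 1 - p) (Or.inl hL.ne')).const_mul (-(p - 1)⁻¹)).congr_deriv ?_
    rw [show 1 - p - 1 = -p by ring, rpow_neg hL.le]
    field_simp [(by linarith : p - 1 ≠ 0)]
    ring
  have hnonneg : ∀ t ∈ Ioi a, 0 ≤ (t * log t ^ p)⁻¹ := fun t ht => by
    have ht1 : 1 < t := ha.trans ht
    have := (log_pos ht1).le
    positivity
  have hlim : Tendsto (fun s => -(p - 1)⁻¹ * log s ^ (1 - p)) atTop (𝓝 0) := by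
    have := ((tendsto_rpow_neg_atTop (by linarith : 0 < p - 1)).comp tendsto_log_atTop).const_mul
      (-(p - 1)⁻¹)
    simpa [Function.comp_def, neg_sub] using this
  exact integrableOn_Ioi_deriv_of_nonneg' hderiv hnonneg hlim

lemma integrableOn_inv_mul_log_rpow_Ici {a p : ℝ} (ha : 1 < a) (hp : 1 < p) :
    IntegrableOn (fun t => (t * log t ^ p)⁻¹) (Ici a) :=
  (integrableOn_Ici_iff_integrableOn_Ioi).2 (integrableOn_inv_mul_log_rpow_Ioi ha hp)

lemma exp_neg_div_window_le {F : ℝ → ℝ} {c γ x : ℝ} (hc : 0 < c) (hγ : 0 ≤ γ)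
    (hx : exp 1 ≤ x - c) (hF : IntervalIntegrable (fun y => exp (-F y)) volume (x - c) x)
    (hslope : ∀ y ∈ Icc (x - c) x, 2 * driftThreshold c γ (x - c) * (x - y) ≤ F x - F y) :
    exp (-F x) / ∫ y in (x - c)..x, exp (-F y)
      ≤ exp 1 * (1 + 2 * γ) / c * ((x - c) * log (x - c) ^ (2 * γ - 1))⁻¹ := by
  have hkc := one_le_two_mul_driftThreshold_mul (γ := γ) hc hγ hx
  have hk : 0 < 2 * driftThreshold c γ (x - c) := by nlinarith
  exact (exp_neg_div_integral_le hF hk hkc hslope).trans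
    (two_mul_driftThreshold_mul_exp_le hc hγ ((one_lt_exp_iff.2 one_pos).trans_le hx))

theorem integrableOn_exp_neg_div_window {F : ℝ → ℝ} {c γ x₀ : ℝ} (hF : Continuous F)
    (hc : 0 < c) (hγ : 1 < γ) (hx₀ : exp 1 ≤ x₀)
    (hslope : ∀ x, x₀ + c ≤ x → ∀ y ∈ Icc (x - c) x,
      2 * driftThreshold c γ (x - c) * (x - y) ≤ F x - F y) :
    IntegrableOn (fun x => exp (-F x) / ∫ y in (x - c)..x, exp (-F y)) (Ici x₀) := by
  have hexp : Continuous fun y => exp (-F y) := by fun_prop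
  have hint (a b : ℝ) : IntervalIntegrable (fun y => exp (-F y)) volume a b :=
    hexp.intervalIntegrable a b
  have hwindow_pos (x : ℝ) : 0 < ∫ y in (x - c)..x, exp (-F y) :=
    intervalIntegral_pos_of_pos (hint _ _) (fun y => exp_pos _) (by linarith)
  have hwindow_cont : Continuous fun x => ∫ y in (x - c)..x, exp (-F y) := by
    have hprim := continuous_primitive hint 0
    have hdiff : (fun x => ∫ y in (x - c)..x, exp (-F y))
        = fun x => (∫ y in (0:ℝ)..x, exp (-F y)) - ∫ y in (0:ℝ)..(x - c), exp (-F y) :=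
      funext fun x => (integral_interval_sub_left (hint 0 x) (hint 0 (x - c))).symm
    rw [hdiff]
    exact hprim.sub (hprim.comp (continuous_sub_right c))
  have hcont : Continuous fun x => exp (-F x) / ∫ y in (x - c)..x, exp (-F y) :=
    hexp.div hwindow_cont fun x => (hwindow_pos x).ne'
  have hmajorant : IntegrableOn
      (fun x => exp 1 * (1 + 2 * γ) / c * ((x - c) * log (x - c) ^ (2 * γ - 1))⁻¹)
      (Ici (x₀ + c)) := by
    have h := integrableOn_inv_mul_log_rpow_Ici
      ((one_lt_exp_iff.2 one_pos).trans_le hx₀) (by linarith : 1 < 2 * γ - 1)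
    rw [← ((measurePreserving_sub_right volume c).integrableOn_comp_preimage
      (measurableEmbedding_subRight c)), preimage_sub_const_Ici] at h
    exact h.const_mul _
  rw [← Icc_union_Ici_eq_Ici (by linarith : x₀ ≤ x₀ + c)]
  refine hcont.continuousOn.integrableOn_Icc.union
    (hmajorant.mono' hcont.aestronglyMeasurable.restrict ?_)
  refine (ae_restrict_iff' measurableSet_Ici).2 (ae_of_all _ fun x hx => ?_)
  rw [norm_of_nonneg (div_nonneg (exp_pos _).le (hwindow_pos x).le)]
  exact exp_neg_div_window_le hc (by linarith) (by linarith [mem_Ici.1 hx]) (hint _ _)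
    (hslope x hx)

/-- Theorem 2(i), analytic content: if `b(x) ≥ (1/(2c))·log x + (γ/c)·log log x` for
some `γ > 1` and all large `x`, then the down-crossing criterion integral is finite. -/
theorem criterion_finite_of_large_drift
    (c : ℝ) (hc : 0 < c)
    (b : ℝ → ℝ) (hb_meas : Measurable b)
    (hb_loc : ∀ K : Set ℝ, IsCompact K → ∃ M, ∀ x ∈ K, |b x| ≤ M)
    (γ x₀ : ℝ) (hγ : 1 < γ) (hx₀ : 3 ≤ x₀)
    (hb : ∀ x : ℝ, x₀ ≤ x →
      (1 / (2 * c)) * Real.log x + (γ / c) * Real.log (Real.log x) ≤ b x)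
    (u : ℝ → ℝ)
    (hu : ∀ x, u x = ∫ y in (0:ℝ)..x, Real.exp (-∫ z in (0:ℝ)..y, 2 * b z)) :
    IntegrableOn
      (fun x => Real.exp (-∫ y in (0:ℝ)..x, 2 * b y) / (u x - u (x - c)))
      (Ici x₀) := by
  have hbi (a₁ a₂ : ℝ) : IntervalIntegrable (fun z => 2 * b z) volume a₁ a₂ :=
    (intervalIntegrable_of_forall_isCompact_bdd hb_meas.aestronglyMeasurable hb_loc
      a₁ a₂).const_mul 2
  have hF := continuous_primitive hbi 0
  have hexpF : Continuous fun y => exp (-∫ z in (0:ℝ)..y, 2 * b z) := by fun_prop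
  have hwindow (x : ℝ) :
      u x - u (x - c) = ∫ y in (x - c)..x, exp (-∫ z in (0:ℝ)..y, 2 * b z) := by
    rw [hu, hu]
    exact integral_interval_sub_left (hexpF.intervalIntegrable _ _)
      (hexpF.intervalIntegrable _ _)
  simp only [hwindow]
  refine integrableOn_exp_neg_div_window hF hc hγ
    ((exp_one_lt_d9.trans (by norm_num)).le.trans hx₀) fun x hx y hy => ?_
  have hxc : x₀ ≤ x - c := by linarith
  rw [integral_interval_sub_left (hbi 0 x) (hbi 0 y)]
  refine mul_sub_le_integral_of_le hy.2 (hbi y x) fun w hw => ?_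
  have hw' : x - c ≤ w := hy.1.trans hw.1
  have hmono : driftThreshold c γ (x - c) ≤ driftThreshold c γ w :=
    driftThreshold_monotoneOn hc.le (by linarith) (mem_Ioi.2 (by linarith))
      (mem_Ioi.2 (by linarith)) hw'
  have hbw : driftThreshold c γ w ≤ b w := hb w (hxc.trans hw')
  linarith
end

section
/- Let c > 0 and let b : ℝ → ℝ be locally bounded and measurable. Suppose there exists x₀ ≥ 3 such that b(x) ≤ (1/(2c))·log x + (1/c)·log(log x) for all x ≥ x₀. Define u(x) = ∫₀ˣ exp(−∫₀ʸ 2b(z) dz) dy. Then ∫_{x₀}^∞ exp(−∫₀ˣ 2b(y) dy) / (u(x) − u(x − c)) dx = ∞. -/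
/-!
On a window `[x - c, x]` with `x₀ ≤ x - c` the drift bound gives
`2b ≤ B := (log x + 2 log log x) / c`, so the scale density `u' = exp (-∫ 2b)` satisfies
`u'(y) ≤ u'(x) e^{(x - y)B}` there and `u(x) - u(x - c) ≤ u'(x) e^{cB} / B`. This `B` is chosen so
that `e^{cB} = x (log x)²`, which makes the integrand at least `1 / (c x log x)`, and
`∫^∞ dx / (x log x)` diverges like `log log x`.
-/

open Real MeasureTheory intervalIntegral Set Filter

theorem not_integrableOn_Ici_inv_div_log (a : ℝ) :
    ¬ IntegrableOn (fun x => x⁻¹ / log x) (Ici a) := by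
  have hd : ∀ᶠ x in atTop, DifferentiableAt ℝ (fun x => log (log x)) x := by
    filter_upwards [Ioi_mem_atTop 1] with x hx
    exact differentiableOn_log_log.differentiableAt (Ioi_mem_nhds hx)
  exact not_integrableOn_of_tendsto_norm_atTop_of_deriv_isBigO_filter atTop (Ici_mem_atTop a) hd
    (tendsto_norm_atTop_atTop.comp (tendsto_log_atTop.comp tendsto_log_atTop))
    (by rw [deriv_log_log]; exact Asymptotics.isBigO_refl _ _)

theorem lintegral_ofReal_const_mul_inv_div_log_eq_top {k a : ℝ} (hk : 0 < k) (ha : 1 ≤ a) :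
    ∫⁻ x in Ici a, ENNReal.ofReal (k * (x⁻¹ / log x)) = ⊤ := by
  by_contra h
  refine not_integrableOn_Ici_inv_div_log a ?_
  have hnonneg : 0 ≤ᵐ[volume.restrict (Ici a)] fun x => k * (x⁻¹ / log x) := by
    filter_upwards [ae_restrict_mem measurableSet_Ici] with x hx
    have : 0 ≤ log x := log_nonneg (ha.trans hx)
    have : 0 ≤ x := by linarith [hx.out]
    positivity
  have hmeas : AEStronglyMeasurable (fun x => k * (x⁻¹ / log x)) (volume.restrict (Ici a)) :=
    (measurable_const.mul (measurable_inv.div measurable_log)).aestronglyMeasurable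
  simpa [IntegrableOn, hk.ne'] using
    ((lintegral_ofReal_ne_top_iff_integrable hmeas hnonneg).1 h).const_mul k⁻¹

theorem intervalIntegrable_of_bounded_on_compacts_s12 {f : ℝ → ℝ} (hf : Measurable f)
    (hbdd : ∀ K : Set ℝ, IsCompact K → ∃ M, ∀ x ∈ K, |f x| ≤ M) (a b : ℝ) :
    IntervalIntegrable f volume a b := by
  obtain ⟨M, hM⟩ := hbdd (uIcc a b) isCompact_uIcc
  refine IntegrableOn.intervalIntegrable <| .of_bound isCompact_uIcc.measure_lt_top
    hf.aestronglyMeasurable M ?_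
  filter_upwards [ae_restrict_mem measurableSet_uIcc] with x hx using hM x hx

section ScaleDensity

variable {g : ℝ → ℝ} {x y h B : ℝ}

theorem continuous_exp_neg_integral (hg : ∀ a b, IntervalIntegrable g volume a b) :
    Continuous fun y => exp (-∫ z in 0..y, g z) :=
  (continuous_primitive hg 0).neg.rexp

theorem exp_neg_integral_le_mul_exp (hg : ∀ a b, IntervalIntegrable g volume a b) (hyx : y ≤ x)
    (hB : ∀ z ∈ Icc y x, g z ≤ B) :
    exp (-∫ z in 0..y, g z) ≤ exp (-∫ z in 0..x, g z) * exp ((x - y) * B) := by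
  have hsplit : ∫ z in 0..x, g z = (∫ z in 0..y, g z) + ∫ z in y..x, g z :=
    (integral_add_adjacent_intervals (hg 0 y) (hg y x)).symm
  have hbound : ∫ z in y..x, g z ≤ (x - y) * B := by
    simpa using integral_mono_on hyx (hg y x) intervalIntegrable_const hB
  rw [← exp_add, exp_le_exp, hsplit]
  linarith

theorem integral_exp_sub_mul (hB : B ≠ 0) :
    ∫ y in (x - h)..x, exp ((x - y) * B) = (exp (h * B) - 1) / B := by
  rw [integral_comp_sub_left (fun t => exp (t * B)), sub_sub_cancel, sub_self,
    integral_comp_mul_right _ hB, integral_exp]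
  simp only [zero_mul, exp_zero, smul_eq_mul]
  ring

theorem integral_exp_neg_integral_le (hg : ∀ a b, IntervalIntegrable g volume a b) (hh : 0 ≤ h)
    (hB₀ : 0 < B) (hB : ∀ z ∈ Icc (x - h) x, g z ≤ B) :
    ∫ y in (x - h)..x, exp (-∫ z in 0..y, g z) ≤ exp (-∫ z in 0..x, g z) * (exp (h * B) / B) := by
  have hcont := continuous_exp_neg_integral hg
  calc ∫ y in (x - h)..x, exp (-∫ z in 0..y, g z)
      ≤ ∫ y in (x - h)..x, exp (-∫ z in 0..x, g z) * exp ((x - y) * B) :=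
        integral_mono_on (by linarith) (hcont.intervalIntegrable _ _)
          (by apply Continuous.intervalIntegrable; fun_prop)
          fun y hy => exp_neg_integral_le_mul_exp hg hy.2 fun z hz => hB z ⟨hy.1.trans hz.1, hz.2⟩
    _ = exp (-∫ z in 0..x, g z) * ((exp (h * B) - 1) / B) := by
        rw [intervalIntegral.integral_const_mul, integral_exp_sub_mul hB₀.ne']
    _ ≤ exp (-∫ z in 0..x, g z) * (exp (h * B) / B) := by
        gcongr
        linarith

theorem div_exp_le_exp_neg_integral_div (hg : ∀ a b, IntervalIntegrable g volume a b) (hh : 0 < h)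
    (hB₀ : 0 < B) (hB : ∀ z ∈ Icc (x - h) x, g z ≤ B) :
    B / exp (h * B) ≤ exp (-∫ z in 0..x, g z) / ∫ y in (x - h)..x, exp (-∫ z in 0..y, g z) := by
  have hcont := continuous_exp_neg_integral hg
  have hpos : 0 < ∫ y in (x - h)..x, exp (-∫ z in 0..y, g z) :=
    intervalIntegral_pos_of_pos_on (hcont.intervalIntegrable _ _) (fun y _ => exp_pos _)
      (by linarith)
  rw [div_le_div_iff₀ (exp_pos _) hpos]
  have := integral_exp_neg_integral_le hg hh.le hB₀ hB
  rw [mul_div_assoc', le_div_iff₀ hB₀] at this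
  linarith

end ScaleDensity

theorem log_add_two_mul_log_log_le {z x : ℝ} (hz : 1 < z) (hzx : z ≤ x) :
    log z + 2 * log (log z) ≤ log x + 2 * log (log x) := by
  have hlog : log z ≤ log x := log_le_log (by linarith) hzx
  have hloglog : log (log z) ≤ log (log x) := log_le_log (log_pos hz) hlog
  linarith

theorem log_add_two_mul_log_log_pos {x : ℝ} (hx : exp 1 ≤ x) : 0 < log x + 2 * log (log x) := by
  have hlog : 1 ≤ log x := (le_log_iff_exp_le ((exp_pos 1).trans_le hx)).2 hx
  have := log_nonneg hlog
  linarith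

theorem two_mul_le_log_add_two_mul_log_log_div {b : ℝ → ℝ} {c x₀ z x : ℝ} (hc : 0 < c)
    (hx₀ : 1 < x₀)
    (hb : ∀ x, x₀ ≤ x → b x ≤ (1 / (2 * c)) * log x + (1 / c) * log (log x))
    (hz : x₀ ≤ z) (hzx : z ≤ x) :
    2 * b z ≤ (log x + 2 * log (log x)) / c := by
  calc 2 * b z ≤ 2 * ((1 / (2 * c)) * log z + (1 / c) * log (log z)) := by linarith [hb z hz]
    _ = (log z + 2 * log (log z)) / c := by field_simp
    _ ≤ (log x + 2 * log (log x)) / c :=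
        div_le_div_of_nonneg_right (log_add_two_mul_log_log_le (hx₀.trans_le hz) hzx) hc.le

theorem inv_mul_inv_div_log_le_div_exp {c x : ℝ} (hc : 0 < c) (hx : exp 1 ≤ x) :
    c⁻¹ * (x⁻¹ / log x) ≤
      (log x + 2 * log (log x)) / c / exp (c * ((log x + 2 * log (log x)) / c)) := by
  have hx₀ : 0 < x := (exp_pos 1).trans_le hx
  have hlog : 1 ≤ log x := (le_log_iff_exp_le hx₀).2 hx
  have hexp : exp (c * ((log x + 2 * log (log x)) / c)) = x * log x ^ 2 := by
    rw [mul_div_cancel₀ _ hc.ne', exp_add, exp_log hx₀, two_mul, exp_add,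
      exp_log (by linarith)]
    ring
  have hloglog : 0 ≤ log (log x) := log_nonneg hlog
  rw [hexp, div_div]
  calc c⁻¹ * (x⁻¹ / log x) = log x / (c * (x * log x ^ 2)) := by field_simp
    _ ≤ (log x + 2 * log (log x)) / (c * (x * log x ^ 2)) := by gcongr; linarith

/-- Theorem 2(ii), analytic content: if `b(x) ≤ (1/(2c))·log x + (1/c)·log log x` for
all large `x`, then the down-crossing criterion integral diverges. -/
theorem criterion_infinite_of_small_drift
    (c : ℝ) (hc : 0 < c)
    (b : ℝ → ℝ) (hb_meas : Measurable b)
    (hb_loc : ∀ K : Set ℝ, IsCompact K → ∃ M, ∀ x ∈ K, |b x| ≤ M)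
    (x₀ : ℝ) (hx₀ : 3 ≤ x₀)
    (hb : ∀ x : ℝ, x₀ ≤ x →
      b x ≤ (1 / (2 * c)) * Real.log x + (1 / c) * Real.log (Real.log x))
    (u : ℝ → ℝ)
    (hu : ∀ x, u x = ∫ y in (0:ℝ)..x, Real.exp (-∫ z in (0:ℝ)..y, 2 * b z)) :
    ∫⁻ x in Ici x₀,
      ENNReal.ofReal
        (Real.exp (-∫ y in (0:ℝ)..x, 2 * b y) / (u x - u (x - c))) = ⊤ := by
  have hg : ∀ a a', IntervalIntegrable (fun z => 2 * b z) volume a a' := fun a a' =>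
    (intervalIntegrable_of_bounded_on_compacts_s12 hb_meas hb_loc a a').const_mul 2
  have he : exp 1 ≤ x₀ := by linarith [exp_one_lt_d9]
  have hx₀' : 1 < x₀ := (one_lt_exp_iff.2 one_pos).trans_le he
  have key : ∀ x ∈ Ici (x₀ + c), ENNReal.ofReal (c⁻¹ * (x⁻¹ / log x)) ≤
      ENNReal.ofReal (exp (-∫ y in 0..x, 2 * b y) / (u x - u (x - c))) := by
    intro x (hx : x₀ + c ≤ x)
    have hwindow : u x - u (x - c) = ∫ y in (x - c)..x, exp (-∫ z in 0..y, 2 * b z) := by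
      rw [hu, hu]
      exact integral_interval_sub_left ((continuous_exp_neg_integral hg).intervalIntegrable _ _)
        ((continuous_exp_neg_integral hg).intervalIntegrable _ _)
    rw [hwindow]
    refine ENNReal.ofReal_le_ofReal ((inv_mul_inv_div_log_le_div_exp hc (by linarith)).trans ?_)
    refine div_exp_le_exp_neg_integral_div hg hc
      (div_pos (log_add_two_mul_log_log_pos (by linarith)) hc) fun z hz => ?_
    exact two_mul_le_log_add_two_mul_log_log_div hc hx₀' hb (by linarith [hz.1]) hz.2
  refine eq_top_iff.2 ?_
  calc ⊤ = ∫⁻ x in Ici (x₀ + c), ENNReal.ofReal (c⁻¹ * (x⁻¹ / log x)) :=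
        (lintegral_ofReal_const_mul_inv_div_log_eq_top (inv_pos.2 hc) (by linarith)).symm
    _ ≤ ∫⁻ x in Ici (x₀ + c), ENNReal.ofReal (exp (-∫ y in 0..x, 2 * b y) / (u x - u (x - c))) :=
        setLIntegral_mono' measurableSet_Ici key
    _ ≤ _ := lintegral_mono_set (Ici_subset_Ici.2 (by linarith))
end
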